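/- arXiv:1802.07901 — 16 statements merged into one kernel-verified Lean document; each statement's English description precedes it below -/
import Mathlib

section
/- Let E ⊆ ℤ^p be closed under componentwise infimum. If α ∈ ℤ^p is such that for every subset J ⊆ {1,…,p} with |J| = 2 the set Δ_J(α,E) is nonempty, then for every subset J ⊆ {1,…,p} with |J| ≥ 2 the set Δ_J(α,E) is nonempty. -/
open Finset

def DeltaJ {p : ℕ} (J : Finset (Fin p)) (α : Fin p → ℤ) (E : Set (Fin p → ℤ)) :
    Set (Fin p → ℤ) :=
  {v | v ∈ E ∧ (∀ j ∈ J, v j = α j) ∧ ∀ j ∉ J, α j < v j}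

def Delta {p : ℕ} (α : Fin p → ℤ) (E : Set (Fin p → ℤ)) : Set (Fin p → ℤ) :=
  ⋃ i : Fin p, DeltaJ {i} α E

def GoodIdeal {p : ℕ} (E : Set (Fin p → ℤ)) : Prop :=
  (∃ lam nu : Fin p → ℤ, (∀ v ∈ E, lam ≤ v) ∧ ∀ v, nu ≤ v → v ∈ E) ∧
  (∀ a ∈ E, ∀ b ∈ E, a ⊓ b ∈ E) ∧
  (∀ a ∈ E, ∀ b ∈ E, a ≠ b → ∀ i, a i = b i →
    ∃ η ∈ E, a i < η i ∧ (∀ j, min (a j) (b j) ≤ η j) ∧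
      ∀ j, a j ≠ b j → η j = min (a j) (b j))

def RelMax {p : ℕ} (E : Set (Fin p → ℤ)) (α : Fin p → ℤ) : Prop :=
  α ∈ E ∧ Delta α E = ∅ ∧ ∀ J : Finset (Fin p), 2 ≤ J.card → (DeltaJ J α E).Nonempty

def AbsMax {p : ℕ} (E : Set (Fin p → ℤ)) (β : Fin p → ℤ) : Prop :=
  β ∈ E ∧ ∀ J : Finset (Fin p), J ≠ ∅ → J ≠ Finset.univ → DeltaJ J β E = ∅

theorem stmt0 {p : ℕ} (hp : 2 ≤ p) (E : Set (Fin p → ℤ))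
    (hinf : ∀ a ∈ E, ∀ b ∈ E, a ⊓ b ∈ E) (α : Fin p → ℤ)
    (h2 : ∀ J : Finset (Fin p), J.card = 2 → (DeltaJ J α E).Nonempty) :
    ∀ J : Finset (Fin p), 2 ≤ J.card → (DeltaJ J α E).Nonempty := by
  have key : ∀ {J1 J2 : Finset (Fin p)} {a b : Fin p → ℤ},
      a ∈ DeltaJ J1 α E → b ∈ DeltaJ J2 α E → a ⊓ b ∈ DeltaJ (J1 ∪ J2) α E := by
    intro J1 J2 a b ⟨haE, ha1, ha2⟩ ⟨hbE, hb1, hb2⟩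
    refine ⟨hinf a haE b hbE, ?_, ?_⟩
    · intro j hj
      have haj : α j ≤ a j := by
        by_cases h : j ∈ J1
        · exact (ha1 j h).ge
        · exact (ha2 j h).le
      have hbj : α j ≤ b j := by
        by_cases h : j ∈ J2
        · exact (hb1 j h).ge
        · exact (hb2 j h).le
      rcases Finset.mem_union.mp hj with h | h
      · have := ha1 j h
        simp [Pi.inf_apply, inf_eq_left.mpr, this, min_eq_left hbj]
      · have := hb1 j h
        simp [Pi.inf_apply]
        omega
    · intro j hj
      have h1 : j ∉ J1 := fun h => hj (Finset.mem_union_left _ h)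
      have h2' : j ∉ J2 := fun h => hj (Finset.mem_union_right _ h)
      have := ha2 j h1
      have := hb2 j h2'
      simp [Pi.inf_apply]
      omega
  intro J hJ
  induction J using Finset.strongInduction with
  | _ J ih =>
    rcases eq_or_lt_of_le hJ with h | h
    · exact h2 J h.symm
    · obtain ⟨i, hi⟩ := Finset.card_pos.mp (by omega : 0 < J.card)
      have hJ' : 2 ≤ (J.erase i).card := by
        rw [Finset.card_erase_of_mem hi]; omega
      obtain ⟨a, ha⟩ := ih (J.erase i) (Finset.erase_ssubset hi) hJ'
      obtain ⟨j, hj⟩ := Finset.card_pos.mp (by omega : 0 < (J.erase i).card)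
      have hij : i ≠ j := fun h => (Finset.ne_of_mem_erase hj) h.symm
      obtain ⟨b, hb⟩ := h2 {i, j} (Finset.card_pair hij)
      refine ⟨a ⊓ b, ?_⟩
      have hun : J.erase i ∪ {i, j} = J := by
        ext x
        simp only [Finset.mem_union, Finset.mem_erase, Finset.mem_insert,
          Finset.mem_singleton]
        constructor
        · rintro (⟨_, hx⟩ | (rfl | rfl))
          · exact hx
          · exact hi
          · exact Finset.mem_of_mem_erase hj
        · intro hx
          by_cases hxi : x = i
          · right; left; exact hxi
          · left; exact ⟨hxi, hx⟩
      rw [← hun]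
      exact key ha hb
end

section
/- Let E ⊆ ℤ^p be a good semigroup ideal and let α ∈ ℤ^p and i ∈ {1,…,p} satisfy: Δ_i(α,E) = ∅ and Δ_{{i,j}}(α,E) ≠ ∅ for every j ≠ i. Then α ∈ E. -/
open Finset

/-! The points of `Δ_{i,j}(α, E)` lie above `α` and agree with it at `i` and `j`; the infimum of
one such point for each `j ≠ i` is therefore `α` itself, and `E` is closed under infima. -/

theorem mem_of_forall_exists_ge_of_eq {ι β : Type*} [Fintype ι] [Nonempty ι] [SemilatticeInf β]
    {E : Set (ι → β)} (hE : ∀ a ∈ E, ∀ b ∈ E, a ⊓ b ∈ E) (α : ι → β)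
    (h : ∀ k, ∃ v ∈ E, α ≤ v ∧ v k = α k) : α ∈ E := by
  choose v hvE hv_ge hv_eq using h
  have hinf : univ.inf' univ_nonempty v = α := by
    funext k
    rw [Finset.inf'_apply]
    exact le_antisymm ((inf'_le _ (mem_univ k)).trans (hv_eq k).le)
      (le_inf' _ _ fun j _ => hv_ge j k)
  exact hinf ▸ inf'_mem E hE univ univ_nonempty v fun j _ => hvE j

theorem le_of_mem_DeltaJ {p : ℕ} {J : Finset (Fin p)} {α v : Fin p → ℤ} {E : Set (Fin p → ℤ)}
    (hv : v ∈ DeltaJ J α E) : α ≤ v := fun k => by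
  by_cases hk : k ∈ J
  · exact (hv.2.1 k hk).ge
  · exact (hv.2.2 k hk).le

theorem stmt1_general {p : ℕ} (hp : 2 ≤ p) (E : Set (Fin p → ℤ)) (hE : GoodIdeal E)
    (α : Fin p → ℤ) (i : Fin p)
    (h2 : ∀ j, j ≠ i → (DeltaJ {i, j} α E).Nonempty) : α ∈ E := by
  have : Nonempty (Fin p) := ⟨i⟩
  obtain ⟨j₀, hj₀⟩ := Fintype.exists_ne_of_one_lt_card (by rw [Fintype.card_fin]; omega) i
  have hwitness : ∀ j, j ≠ i → ∃ v ∈ E, α ≤ v ∧ v i = α i ∧ v j = α j := fun j hj => by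
    obtain ⟨v, hv⟩ := h2 j hj
    exact ⟨v, hv.1, le_of_mem_DeltaJ hv, hv.2.1 i (by simp), hv.2.1 j (by simp)⟩
  refine mem_of_forall_exists_ge_of_eq hE.2.1 α fun k => ?_
  by_cases hk : k = i
  · obtain ⟨v, hvE, hv_ge, hv_i, -⟩ := hwitness j₀ hj₀
    exact ⟨v, hvE, hv_ge, hk ▸ hv_i⟩
  · obtain ⟨v, hvE, hv_ge, -, hv_k⟩ := hwitness k hk
    exact ⟨v, hvE, hv_ge, hv_k⟩

theorem stmt1 {p : ℕ} (hp : 2 ≤ p) (E : Set (Fin p → ℤ)) (hE : GoodIdeal E)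
    (α : Fin p → ℤ) (i : Fin p) (h1 : DeltaJ {i} α E = ∅)
    (h2 : ∀ j, j ≠ i → (DeltaJ {i, j} α E).Nonempty) : α ∈ E :=
  stmt1_general hp E hE α i h2
end

section
/- Let E ⊆ ℤ^p be a good semigroup ideal and let α ∈ ℤ^p and i ∈ {1,…,p} satisfy: Δ_i(α,E) = ∅ and Δ_{{i,j}}(α,E) ≠ ∅ for every j ≠ i. Then Δ_k(α,E) = ∅ for every k ∈ {1,…,p}. -/
open Finset

theorem stmt2 {p : ℕ} (hp : 2 ≤ p) (E : Set (Fin p → ℤ)) (hE : GoodIdeal E)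
    (α : Fin p → ℤ) (i : Fin p) (h1 : DeltaJ {i} α E = ∅)
    (h2 : ∀ j, j ≠ i → (DeltaJ {i, j} α E).Nonempty) :
    ∀ k : Fin p, DeltaJ {k} α E = ∅ := by
  intro k
  by_cases hk : k = i
  · subst hk; exact h1
  rw [Set.eq_empty_iff_forall_notMem]
  intro β hβ
  obtain ⟨hβE, hβeq, hβgt⟩ := hβ
  obtain ⟨δ, hδE, hδeq, hδgt⟩ := h2 k hk
  have hβk : β k = α k := hβeq k (Finset.mem_singleton_self k)
  have hδi : δ i = α i := hδeq i (by simp)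
  have hδk : δ k = α k := hδeq k (by simp)
  have hβi : α i < β i := hβgt i (by simpa using fun h : i = k => hk h.symm)
  have hne : β ≠ δ := by
    intro h
    rw [h, hδi] at hβi
    exact lt_irrefl _ hβi
  obtain ⟨η, hηE, hηk, hηge, hηeqm⟩ :=
    hE.2.2 β hβE δ hδE hne k (hβk.trans hδk.symm)
  have hmem : η ∈ DeltaJ {i} α E := by
    refine ⟨hηE, ?_, ?_⟩
    · intro j hj
      rw [Finset.mem_singleton] at hj
      rw [hj]
      have h := hηeqm i (by rw [hδi]; exact ne_of_gt hβi)
      rw [h, hδi, min_eq_right hβi.le]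
    · intro j hj
      rw [Finset.mem_singleton] at hj
      by_cases hjk : j = k
      · subst hjk; rw [← hβk]; exact hηk
      · have ha : α j < β j := hβgt j (by simpa using hjk)
        have hb : α j < δ j := hδgt j (by simp [hj, hjk])
        calc α j < min (β j) (δ j) := lt_min ha hb
          _ ≤ η j := hηge j
  rw [h1] at hmem
  exact hmem
end

section
/- Let E ⊆ ℤ^p be a good semigroup ideal and let α ∈ ℤ^p and i ∈ {1,…,p} satisfy: Δ_i(α,E) = ∅ and Δ_{{i,j}}(α,E) ≠ ∅ for every j ≠ i. Then α is a relative maximal of E, i.e. α ∈ E, Δ_k(α,E) = ∅ for all k, and Δ_J(α,E) ≠ ∅ for all J ⊆ {1,…,p} with |J| ≥ 2. -/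
open Finset

theorem stmt3 {p : ℕ} (hp : 2 ≤ p) (E : Set (Fin p → ℤ)) (hE : GoodIdeal E)
    (α : Fin p → ℤ) (i : Fin p) (h1 : DeltaJ {i} α E = ∅)
    (h2 : ∀ j, j ≠ i → (DeltaJ {i, j} α E).Nonempty) : RelMax E α := by
  obtain ⟨-, hE1, hE2⟩ := hE
  -- choose witnesses B j ∈ Δ_{i,j}(α,E) for each j ≠ i
  have hBex : ∀ j : Fin p, ∃ b : Fin p → ℤ, j ≠ i → b ∈ DeltaJ {i, j} α E := by
    intro j
    by_cases h : j = i
    · exact ⟨0, fun hj => absurd h hj⟩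
    · exact ⟨(h2 j h).choose, fun _ => (h2 j h).choose_spec⟩
  choose B hB using hBex
  have hBE : ∀ j : Fin p, j ≠ i → B j ∈ E := fun j hj => (hB j hj).1
  have hBi : ∀ j, j ≠ i → B j i = α i := fun j hj =>
    (hB j hj).2.1 i (mem_insert_self i _)
  have hBj : ∀ j, j ≠ i → B j j = α j := fun j hj =>
    (hB j hj).2.1 j (mem_insert_of_mem (mem_singleton_self j))
  have hBgt : ∀ j, j ≠ i → ∀ k, k ≠ i → k ≠ j → α k < B j k := by
    intro j hj k hki hkj
    refine (hB j hj).2.2 k ?_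
    simp [hki, hkj]
  have hBge : ∀ j, j ≠ i → ∀ k, α k ≤ B j k := by
    intro j hj k
    by_cases h1' : k = i
    · subst h1'; exact (hBi j hj).ge
    by_cases h2' : k = j
    · rw [h2']; exact (hBj j hj).ge
    · exact (hBgt j hj k h1' h2').le
  -- Lemma A : inf of B over a finset s not containing i lies in Δ_{insert i s}
  have lemA : ∀ s : Finset (Fin p), ∀ hs : s.Nonempty, i ∉ s →
      s.inf' hs B ∈ DeltaJ (insert i s) α E := by
    intro s hs his
    have hne : ∀ j ∈ s, j ≠ i := fun j hj h => his (h ▸ hj)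
    refine ⟨Finset.inf'_mem E (fun x hx y hy => hE1 x hx y hy) s hs B
      (fun j hj => hBE j (hne j hj)), ?_, ?_⟩
    · intro k hk
      rw [Finset.inf'_apply]
      rcases mem_insert.mp hk with h | h
      · subst h
        apply le_antisymm
        · have hj := hs.choose_spec
          exact le_trans (Finset.inf'_le _ hj) (hBi hs.choose (hne _ hj)).le
        · exact Finset.le_inf' _ _ fun j hj => (hBi j (hne j hj)).ge
      · apply le_antisymm
        · exact le_trans (Finset.inf'_le _ h) (hBj k (hne k h)).le
        · exact Finset.le_inf' _ _ fun j hj => hBge j (hne j hj) k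
    · intro k hk
      rw [Finset.inf'_apply, Finset.lt_inf'_iff]
      intro j hj
      have hki : k ≠ i := fun h => hk (h ▸ mem_insert_self i s)
      have hkj : k ≠ j := fun h => hk (mem_insert_of_mem (h ▸ hj))
      exact hBgt j (hne j hj) k hki hkj
  -- α ∈ E
  have hαE : α ∈ E := by
    obtain ⟨j0, hj0⟩ := Fintype.exists_ne_of_one_lt_card (by simp; omega) i
    have hs : (univ.erase i).Nonempty := ⟨j0, mem_erase.mpr ⟨hj0, mem_univ j0⟩⟩
    have his : i ∉ univ.erase i := notMem_erase i univ
    have h := lemA (univ.erase i) hs his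
    rw [Finset.insert_erase (mem_univ i)] at h
    have : (univ.erase i).inf' hs B = α := funext fun k => h.2.1 k (mem_univ k)
    exact this ▸ h.1
  -- Δ_k(α,E) = ∅ for all k
  have hDk : ∀ k : Fin p, DeltaJ {k} α E = ∅ := by
    intro k
    by_cases hk : k = i
    · exact hk ▸ h1
    · rw [Set.eq_empty_iff_forall_notMem]
      intro v hv
      obtain ⟨hvE, hveq, hvgt⟩ := hv
      have hvk : v k = α k := hveq k (mem_singleton_self k)
      have hvgt' : ∀ l, l ≠ k → α l < v l := fun l hl =>
        hvgt l (fun h => hl (mem_singleton.mp h))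
      have hne : v ≠ B k := by
        intro h
        have := hvgt' i (fun h => hk h.symm)
        rw [h, hBi k hk] at this
        exact lt_irrefl _ this
      have hkeq : v k = B k k := by rw [hvk, hBj k hk]
      obtain ⟨η, hηE, hηk, hηmin, hηeq⟩ := hE2 v hvE (B k) (hBE k hk) hne k hkeq
      have hmem : η ∈ DeltaJ {i} α E := by
        refine ⟨hηE, ?_, ?_⟩
        · intro l hl
          rw [mem_singleton.mp hl]
          have hvi : v i ≠ B k i := by
            rw [hBi k hk]
            exact ne_of_gt (hvgt' i (fun h => hk h.symm))
          rw [hηeq i hvi, hBi k hk]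
          exact min_eq_right (hvgt' i (fun h => hk h.symm)).le
        · intro l hl
          have hli : l ≠ i := fun h => hl (h ▸ mem_singleton_self i)
          by_cases hlk : l = k
          · subst hlk; rw [← hvk]; exact hηk
          · exact lt_of_lt_of_le (lt_min (hvgt' l hlk) (hBgt k hk l hli hlk))
              (hηmin l)
      rw [h1] at hmem
      exact hmem
  refine ⟨hαE, ?_, ?_⟩
  · rw [Set.eq_empty_iff_forall_notMem]
    intro v hv
    obtain ⟨k, hk⟩ := Set.mem_iUnion.mp hv
    rw [hDk k] at hk
    exact hk
  · intro J hJcard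
    have hJne : J.Nonempty := card_pos.mp (by omega)
    by_cases hiJ : i ∈ J
    · have hs : (J.erase i).Nonempty := by
        rw [← card_pos, card_erase_of_mem hiJ]; omega
      have h := lemA (J.erase i) hs (notMem_erase i J)
      rw [Finset.insert_erase hiJ] at h
      exact ⟨_, h⟩
    · -- i ∉ J
      obtain ⟨hδE, hδeq, hδgt⟩ := lemA J hJne hiJ
      set δ := J.inf' hJne B with hδdef
      have hδge : ∀ k, α k ≤ δ k := by
        intro k
        by_cases h : k ∈ insert i J
        · exact (hδeq k h).ge
        · exact (hδgt k h).le
      have hη : ∀ j : Fin p, ∃ η : Fin p → ℤ, j ∈ J →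
          η ∈ E ∧ α i < η i ∧ (∀ l, α l ≤ η l) ∧
          (∀ l ∈ J, l ≠ j → η l = α l) ∧ (∀ l, l ∉ J → l ≠ i → α l < η l) := by
        intro j
        by_cases hjJ : j ∈ J
        swap
        · exact ⟨0, fun h => absurd h hjJ⟩
        have hji : j ≠ i := fun h => hiJ (h ▸ hjJ)
        obtain ⟨j', hj'J, hj'j⟩ := Finset.exists_mem_ne (s := J) (by omega) j
        have hj'i : j' ≠ i := fun h => hiJ (h ▸ hj'J)
        have hne : δ ≠ B j := by
          intro h
          have h1' : δ j' = α j' := hδeq j' (mem_insert_of_mem hj'J)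
          rw [h] at h1'
          exact absurd h1' (hBgt j hji j' hj'i hj'j).ne'
        have hieq : δ i = B j i := by
          rw [hδeq i (mem_insert_self i J), hBi j hji]
        obtain ⟨η, hηE, hηi, hηmin, hηeq⟩ := hE2 δ hδE (B j) (hBE j hji) hne i hieq
        refine ⟨η, fun _ => ⟨hηE, ?_, ?_, ?_, ?_⟩⟩
        · rw [← hδeq i (mem_insert_self i J)]; exact hηi
        · exact fun l => le_trans (le_min (hδge l) (hBge j hji l)) (hηmin l)
        · intro l hlJ hlj
          have hli : l ≠ i := fun h => hiJ (h ▸ hlJ)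
          have hδl : δ l = α l := hδeq l (mem_insert_of_mem hlJ)
          have hBl : α l < B j l := hBgt j hji l hli hlj
          have hd : δ l ≠ B j l := by rw [hδl]; exact hBl.ne
          rw [hηeq l hd, hδl, min_eq_left hBl.le]
        · intro l hlJ hli
          have hδl : α l < δ l := hδgt l (by
            intro h
            rcases mem_insert.mp h with h' | h'
            · exact hli h'
            · exact hlJ h')
          have hBl : α l < B j l := hBgt j hji l hli (fun h => hlJ (h ▸ hjJ))
          exact lt_of_lt_of_le (lt_min hδl hBl) (hηmin l)
      choose η hηspec using hη
      refine ⟨J.inf' hJne η, ?_, ?_, ?_⟩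
      · exact Finset.inf'_mem E (fun x hx y hy => hE1 x hx y hy) J hJne η
          (fun j hj => (hηspec j hj).1)
      · intro k hkJ
        rw [Finset.inf'_apply]
        apply le_antisymm
        · obtain ⟨j', hj'J, hj'k⟩ := Finset.exists_mem_ne (s := J) (by omega) k
          exact le_trans (Finset.inf'_le _ hj'J)
            ((hηspec j' hj'J).2.2.2.1 k hkJ (Ne.symm hj'k)).le
        · exact Finset.le_inf' _ _ fun j hj => (hηspec j hj).2.2.1 k
      · intro k hkJ
        rw [Finset.inf'_apply, Finset.lt_inf'_iff]
        intro j hj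
        by_cases hki : k = i
        · subst hki; exact (hηspec j hj).2.1
        · exact (hηspec j hj).2.2.2.2 k hkJ hki
end

section
/- Let K ⊆ ℤ^p, γ ∈ ℤ^p with Δ(γ − 1, K) = ∅ (where 1 = (1,…,1)). Let E, E' ⊆ ℤ^p with E + E' ⊆ K. Let α ∈ E be such that Δ_J(α,E) ≠ ∅ for every J ⊆ {1,…,p} with |J| ≥ 2, and set β = γ − α − 1. Then for every A ⊆ {1,…,p} with A ≠ ∅ and A ≠ {1,…,p}, we have Δ_A(β, E') = ∅. -/
open Finset

theorem stmt5 {p : ℕ} (hp : 2 ≤ p) (K E E' : Set (Fin p → ℤ)) (γ : Fin p → ℤ)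
    (hK : Delta (γ - 1) K = ∅)
    (hsum : ∀ a ∈ E, ∀ b ∈ E', a + b ∈ K)
    (α : Fin p → ℤ) (hα : α ∈ E)
    (hJ : ∀ J : Finset (Fin p), 2 ≤ J.card → (DeltaJ J α E).Nonempty) :
    ∀ A : Finset (Fin p), A ≠ ∅ → A ≠ Finset.univ →
      DeltaJ A (γ - α - 1) E' = ∅ := by
  intro A hA hAu
  rw [Set.eq_empty_iff_forall_notMem]
  rintro b ⟨hbE, hbeq, hbgt⟩
  obtain ⟨i₀, hi₀⟩ := Finset.nonempty_iff_ne_empty.mpr hA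
  have hcompl : Aᶜ.Nonempty := by
    rw [Finset.nonempty_iff_ne_empty]
    simpa using hAu
  have hi₀c : i₀ ∉ Aᶜ := by simpa using hi₀
  have hcard : 2 ≤ (insert i₀ Aᶜ).card := by
    rw [Finset.card_insert_of_notMem hi₀c]
    have := Finset.Nonempty.card_pos hcompl
    omega
  obtain ⟨a, haE, haeq, hagt⟩ := hJ (insert i₀ Aᶜ) hcard
  have : a + b ∈ Delta (γ - 1) K := by
    refine Set.mem_iUnion.mpr ⟨i₀, hsum a haE b hbE, ?_, ?_⟩
    · intro j hj
      simp only [Finset.mem_singleton] at hj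
      subst hj
      have h1 : a j = α j := haeq j (Finset.mem_insert_self _ _)
      have h2 : b j = (γ - α - 1) j := hbeq j hi₀
      simp only [Pi.add_apply, Pi.sub_apply, Pi.one_apply] at *
      linarith
    · intro j hj
      simp only [Finset.mem_singleton] at hj
      by_cases hjA : j ∈ A
      · have h1 : α j < a j := by
          refine hagt j ?_
          simp [Finset.mem_insert, hj, hjA]
        have h2 : b j = (γ - α - 1) j := hbeq j hjA
        simp only [Pi.add_apply, Pi.sub_apply, Pi.one_apply] at *
        linarith
      · have h1 : a j = α j := haeq j (Finset.mem_insert_of_mem (by simpa using hjA))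
        have h2 : (γ - α - 1) j < b j := hbgt j hjA
        simp only [Pi.add_apply, Pi.sub_apply, Pi.one_apply] at *
        linarith
  rw [hK] at this
  exact this
end

section
/- Let E ⊆ ℤ^p (p ≥ 3) be a good semigroup ideal, let β ∈ E, and let v ∈ ℤ^p satisfy v_1 = β_1, v_2 = β_2, and v_i < β_i for all i ≥ 3. Then Δ_1(v,E) ≠ ∅ if and only if Δ_2(v,E) ≠ ∅. -/
open Finset

lemma aux6 {q : ℕ} (E : Set (Fin q → ℤ)) (hE : GoodIdeal E)
    (β : Fin q → ℤ) (hβ : β ∈ E) (v : Fin q → ℤ) (i j : Fin q) (hij : i ≠ j)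
    (hvi : v i = β i) (hvj : v j = β j) (h2 : ∀ k, k ≠ i → k ≠ j → v k < β k)
    (h : (DeltaJ {i} v E).Nonempty) : (DeltaJ {j} v E).Nonempty := by
  obtain ⟨w, hwE, hweq, hwgt⟩ := h
  have hwi : w i = β i := (hweq i (Finset.mem_singleton_self i)).trans hvi
  have hwj : β j < w j := by
    have := hwgt j (by simp [Finset.mem_singleton, (Ne.symm hij)])
    omega
  have hwβ : w ≠ β := fun h => by rw [h] at hwj; omega
  obtain ⟨η, hηE, hηi, hηmin, hηeq⟩ := hE.2.2 w hwE β hβ hwβ i hwi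
  refine ⟨η, hηE, ?_, ?_⟩
  · intro k hk
    rw [Finset.mem_singleton] at hk
    rw [hk]
    have := hηeq j (by omega)
    omega
  · intro k hk
    rw [Finset.mem_singleton] at hk
    rcases eq_or_ne k i with rfl | hki
    · omega
    · have h1 := hηmin k
      have h2 := h2 k hki hk
      have h3 := hwgt k (by simpa [Finset.mem_singleton] using hki)
      simp only [le_min_iff, min_le_iff] at *
      omega

theorem stmt6 {p : ℕ} (E : Set (Fin (p + 3) → ℤ)) (hE : GoodIdeal E)
    (β : Fin (p + 3) → ℤ) (hβ : β ∈ E) (v : Fin (p + 3) → ℤ)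
    (h0 : v 0 = β 0) (h1 : v 1 = β 1) (h2 : ∀ i, i ≠ 0 → i ≠ 1 → v i < β i) :
    (DeltaJ {0} v E).Nonempty ↔ (DeltaJ {1} v E).Nonempty := by
  constructor
  · exact aux6 E hE β hβ v 0 1 (by simp) h0 h1 h2
  · exact aux6 E hE β hβ v 1 0 (by simp) h1 h0 (fun k hk0 hk1 => h2 k hk1 hk0)
end

section
/- Let E ⊆ ℤ^p (p ≥ 3) and let β ∈ E be an absolute maximal of E. Let β' = (β_1, β_2, β_3 − 1, …, β_p − 1). Then Δ_1(β', E) = ∅ and Δ_2(β', E) = ∅. -/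
open Finset

lemma absmax_aux {p : ℕ} (E : Set (Fin p → ℤ)) (β : Fin p → ℤ) (hβ : AbsMax E β)
    (w : Fin p → ℤ) (hw : w ∈ E) (hle : ∀ j, β j ≤ w j)
    (i : Fin p) (hi : w i = β i) (k : Fin p) (hk : w k ≠ β k) : False := by
  set J := Finset.univ.filter (fun j => w j = β j) with hJ
  have hiJ : i ∈ J := by simp [hJ, hi]
  have hne : J ≠ ∅ := Finset.ne_empty_of_mem hiJ
  have hnu : J ≠ Finset.univ := by
    intro h
    have : k ∈ J := h ▸ Finset.mem_univ k
    simp [hJ] at this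
    exact hk this
  have hempty := hβ.2 J hne hnu
  apply Set.eq_empty_iff_forall_notMem.mp hempty w
  refine ⟨hw, ?_, ?_⟩
  · intro j hj; simpa [hJ] using hj
  · intro j hj
    simp [hJ] at hj
    exact lt_of_le_of_ne (hle j) (Ne.symm hj)

theorem stmt7 {p : ℕ} (E : Set (Fin (p + 3) → ℤ)) (β : Fin (p + 3) → ℤ)
    (hβ : AbsMax E β) :
    DeltaJ {0} (fun i => if i = 0 then β 0 else if i = 1 then β 1 else β i - 1) E = ∅ ∧
    DeltaJ {1} (fun i => if i = 0 then β 0 else if i = 1 then β 1 else β i - 1) E = ∅ := by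
  constructor
  · apply Set.eq_empty_iff_forall_notMem.mpr
    rintro w ⟨hwE, heq, hgt⟩
    have h0 : w 0 = β 0 := by simpa using heq 0 (by simp)
    have h1 : β 1 < w 1 := by simpa using hgt 1 (by simp [Fin.ext_iff])
    have hle : ∀ j, β j ≤ w j := by
      intro j
      by_cases hj0 : j = 0
      · subst hj0; exact h0.ge
      by_cases hj1 : j = 1
      · subst hj1; exact h1.le
      · have := hgt j (by simpa using hj0)
        simp [hj0, hj1] at this
        omega
    exact absmax_aux E β hβ w hwE hle 0 h0 1 h1.ne'
  · apply Set.eq_empty_iff_forall_notMem.mpr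
    rintro w ⟨hwE, heq, hgt⟩
    have h1 : w 1 = β 1 := by simpa using heq 1 (by simp)
    have h0 : β 0 < w 0 := by simpa using hgt 0 (by simp [Fin.ext_iff])
    have hle : ∀ j, β j ≤ w j := by
      intro j
      by_cases hj0 : j = 0
      · subst hj0; exact h0.le
      by_cases hj1 : j = 1
      · subst hj1; exact h1.ge
      · have := hgt j (by simpa using hj1)
        simp [hj0, hj1] at this
        omega
    exact absmax_aux E β hβ w hwE hle 1 h1 0 h0.ne'
end

section
/- Let E ⊆ ℤ^p be a good semigroup ideal with conductor-type bound γ, let E^∨ = {v ∈ ℤ^p | Δ(γ − v − 1, E) = ∅} and assume E^∨ is also a good semigroup ideal and E = {v ∈ ℤ^p | Δ(γ − v − 1, E^∨) = ∅}. Let α ∈ E and β ∈ E^∨ with α + β = γ − 1 (where 1 = (1,…,1)). Then β is an absolute maximal of E^∨ if and only if α is a relative maximal of E. -/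
open Finset

theorem stmt8 {p : ℕ} (hp : 2 ≤ p) (E : Set (Fin p → ℤ)) (γ : Fin p → ℤ)
    (hE : GoodIdeal E) (Edual : Set (Fin p → ℤ))
    (hdual : Edual = {v | Delta (γ - v - 1) E = ∅}) (hEd : GoodIdeal Edual)
    (hbid : E = {v | Delta (γ - v - 1) Edual = ∅})
    (α β : Fin p → ℤ) (hα : α ∈ E) (hβ : β ∈ Edual) (hsum : α + β = γ - 1) :
    AbsMax Edual β ↔ RelMax E α := by
  classical
  have hsum' : ∀ j, α j + β j = γ j - 1 := by
    intro j
    have := congrFun hsum j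
    simpa using this
  constructor
  · -- AbsMax → RelMax
    rintro ⟨hβG, habs⟩
    have hΔα : Delta α E = ∅ := by
      have h1 : Delta (γ - β - 1) E = ∅ := by
        have h := hβ
        rw [hdual] at h
        exact h
      have h2 : γ - β - 1 = α := by
        funext j
        have := hsum' j
        simp only [Pi.sub_apply, Pi.one_apply]
        linarith
      rwa [h2] at h1
    refine ⟨hα, hΔα, ?_⟩
    intro J hJ2
    by_cases hJu : J = Finset.univ
    · exact ⟨α, hα, fun j _ => rfl, fun j hj => (hj (hJu ▸ Finset.mem_univ j)).elim⟩
    obtain ⟨⟨lam, nu, hlam, -⟩, -, hE2⟩ := hEd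
    -- J-type witness predicate
    set Q : (Fin p → ℤ) → Prop := fun δ =>
      ∃ g ∈ Edual, ∃ j₀ ∈ J, g j₀ = β j₀ ∧ (∀ k ∈ J, k ≠ j₀ → β k < g k) ∧
        (∀ k ∉ J, δ k < g k) with hQdef
    set Dok : (Fin p → ℤ) → Prop := fun δ =>
      ((∀ j ∈ J, δ j = β j) ∧ (∀ j ∉ J, lam j - 1 ≤ δ j ∧ δ j < β j)) ∧ ¬ Q δ with hDdef
    -- blocking lemma from AbsMax
    have hblock : ∀ g ∈ Edual, ∀ j₀ ∈ J, g j₀ = β j₀ → (∀ k ∈ J, k ≠ j₀ → β k < g k) →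
        (∀ k ∉ J, β k ≤ g k) → False := by
      intro g hg j₀ hj₀ hgj₀ hgJ hout
      set S : Finset (Fin p) := Finset.univ.filter (fun j => g j = β j) with hSdef
      have hj₀S : j₀ ∈ S := by simp [hSdef, hgj₀]
      obtain ⟨j₁, hj₁J, hj₁ne⟩ := Finset.exists_mem_ne (by omega : 1 < J.card) j₀
      have hgj₁ : β j₁ < g j₁ := hgJ j₁ hj₁J hj₁ne
      have hSne : S ≠ ∅ := Finset.ne_empty_of_mem hj₀S
      have hSnu : S ≠ Finset.univ := by
        intro h
        have hmem : j₁ ∈ S := h ▸ Finset.mem_univ j₁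
        rw [hSdef] at hmem
        simp only [Finset.mem_filter] at hmem
        omega
      have hempty := habs S hSne hSnu
      have hmem : g ∈ DeltaJ S β Edual := by
        refine ⟨hg, ?_, ?_⟩
        · intro j hj
          rw [hSdef] at hj
          simpa using hj
        · intro j hj
          have hne : g j ≠ β j := by
            rw [hSdef] at hj
            simpa using hj
          by_cases hjJ : j ∈ J
          · rcases eq_or_ne j j₀ with rfl | h
            · exact absurd hgj₀ hne
            · exact hgJ j hjJ h
          · exact lt_of_le_of_ne (hout j hjJ) (Ne.symm hne)
      rw [hempty] at hmem
      exact hmem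
    -- the starting element of Dok
    have hd0 : Dok (fun j => if j ∈ J then β j else β j - 1) := by
      constructor
      · constructor
        · intro j hj
          simp [hj]
        · intro j hj
          have hlj : lam j ≤ β j := hlam β hβ j
          simp only [hj, if_false]
          omega
      · rintro ⟨g, hg, j₀, hj₀, hgj₀, hgJ, hgJc⟩
        refine hblock g hg j₀ hj₀ hgj₀ hgJ ?_
        intro k hk
        have := hgJc k hk
        simp only [hk, if_false] at this
        omega
    -- choose minimal element
    have hbdd : ∃ b : ℤ, ∀ n : ℤ, (∃ δ, Dok δ ∧ ∑ j ∈ Jᶜ, δ j = n) → b ≤ n := by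
      refine ⟨∑ j ∈ Jᶜ, (lam j - 1), ?_⟩
      rintro n ⟨δ, ⟨⟨-, h2⟩, -⟩, rfl⟩
      exact Finset.sum_le_sum fun j hj => (h2 j (Finset.mem_compl.mp hj)).1
    have hinh : ∃ n : ℤ, ∃ δ, Dok δ ∧ ∑ j ∈ Jᶜ, δ j = n :=
      ⟨_, _, hd0, rfl⟩
    obtain ⟨n₀, ⟨δ, hδok, hδsum⟩, hmin⟩ := Int.exists_least_of_bdd hbdd hinh
    obtain ⟨⟨hδJ, hδJc⟩, hnQ⟩ := hδok
    -- Delta δ Edual = ∅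
    have hΔδ : Delta δ Edual = ∅ := by
      rw [Set.eq_empty_iff_forall_notMem]
      intro g hgmem
      rw [Delta, Set.mem_iUnion] at hgmem
      obtain ⟨ι, hg, hgeq, hggt⟩ := hgmem
      have hgι : g ι = δ ι := hgeq ι (Finset.mem_singleton_self ι)
      have hgt : ∀ j, j ≠ ι → δ j < g j := fun j hj =>
        hggt j (by simp [hj])
      by_cases hιJ : ι ∈ J
      · refine hnQ ⟨g, hg, ι, hιJ, by rw [hgι, hδJ ι hιJ], ?_, ?_⟩
        · intro k hk hkne
          have := hgt k hkne
          rwa [hδJ k hk] at this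
        · intro k hk
          exact hgt k (fun h => hk (h ▸ hιJ))
      · have hδι : lam ι ≤ δ ι := hgι ▸ hlam g hg ι
        set δ' : Fin p → ℤ := Function.update δ ι (δ ι - 1) with hδ'def
        have hι : ι ∈ Jᶜ := Finset.mem_compl.mpr hιJ
        have hδ'ι : δ' ι = δ ι - 1 := Function.update_self ι _ δ
        have hδ'ne : ∀ j, j ≠ ι → δ' j = δ j := fun j hj => Function.update_of_ne hj _ δ
        have hδ'sum : ∑ j ∈ Jᶜ, δ' j = n₀ - 1 := by
          have e1 : δ ι + ∑ j ∈ Jᶜ.erase ι, δ j = ∑ j ∈ Jᶜ, δ j :=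
            Finset.add_sum_erase _ δ hι
          have e2 : δ' ι + ∑ j ∈ Jᶜ.erase ι, δ' j = ∑ j ∈ Jᶜ, δ' j :=
            Finset.add_sum_erase _ δ' hι
          have e3 : ∑ j ∈ Jᶜ.erase ι, δ' j = ∑ j ∈ Jᶜ.erase ι, δ j :=
            Finset.sum_congr rfl fun j hj => hδ'ne j (Finset.ne_of_mem_erase hj)
          rw [← e2, e3, hδ'ι]
          omega
        have hQδ' : Q δ' := by
          by_contra hnq
          have hDok' : Dok δ' := by
            refine ⟨⟨?_, ?_⟩, hnq⟩
            · intro j hj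
              rw [hδ'ne j (fun h => hιJ (h ▸ hj))]
              exact hδJ j hj
            · intro j hj
              rcases eq_or_ne j ι with rfl | hne
              · rw [hδ'ι]
                have := (hδJc j hj).2
                omega
              · rw [hδ'ne j hne]
                exact hδJc j hj
          have := hmin (n₀ - 1) ⟨δ', hDok', hδ'sum⟩
          omega
        obtain ⟨w, hw, j₀, hj₀, hwj₀, hwJ, hwJc⟩ := hQδ'
        have hwι_ge : δ ι ≤ w ι := by
          have := hwJc ι hιJ
          rw [hδ'ι] at this
          omega
        have hwι : w ι = δ ι := by
          refine le_antisymm ?_ hwι_ge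
          by_contra hlt
          push_neg at hlt
          refine hnQ ⟨w, hw, j₀, hj₀, hwj₀, hwJ, ?_⟩
          intro k hk
          rcases eq_or_ne k ι with rfl | hne
          · exact hlt
          · have := hwJc k hk
            rwa [hδ'ne k hne] at this
        have hj₀ι : j₀ ≠ ι := fun h => hιJ (h ▸ hj₀)
        have hβj₀ : β j₀ < g j₀ := by
          have := hgt j₀ hj₀ι
          rwa [hδJ j₀ hj₀] at this
        have hwg : w ≠ g := by
          intro h
          rw [h] at hwj₀
          omega
        obtain ⟨η, hη, hηι, hηmin, hηeq⟩ := hE2 w hw g hg hwg ι (by rw [hwι, hgι])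
        refine hnQ ⟨η, hη, j₀, hj₀, ?_, ?_, ?_⟩
        · have hne : w j₀ ≠ g j₀ := by
            rw [hwj₀]
            exact ne_of_lt hβj₀
          rw [hηeq j₀ hne, hwj₀]
          exact min_eq_left hβj₀.le
        · intro k hk hkne
          have h1 : β k < w k := hwJ k hk hkne
          have h2 : β k < g k := by
            have := hgt k (fun h => hιJ (h ▸ hk))
            rwa [hδJ k hk] at this
          exact lt_of_lt_of_le (lt_min h1 h2) (hηmin k)
        · intro k hk
          rcases eq_or_ne k ι with rfl | hne
          · rw [← hwι]
            exact hηι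
          · have h1 : δ k < w k := by
              have := hwJc k hk
              rwa [hδ'ne k hne] at this
            have h2 : δ k < g k := hgt k hne
            exact lt_of_lt_of_le (lt_min h1 h2) (hηmin k)
    -- conclude
    refine ⟨γ - δ - 1, ?_, ?_, ?_⟩
    · rw [hbid]
      show Delta (γ - (γ - δ - 1) - 1) Edual = ∅
      have h : γ - (γ - δ - 1) - 1 = δ := by
        funext j
        simp only [Pi.sub_apply, Pi.one_apply]
        ring
      rwa [h]
    · intro j hj
      have h1 := hδJ j hj
      have h2 := hsum' j
      simp only [Pi.sub_apply, Pi.one_apply]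
      omega
    · intro j hj
      have h1 := (hδJc j hj).2
      have h2 := hsum' j
      simp only [Pi.sub_apply, Pi.one_apply]
      omega
  · -- RelMax → AbsMax
    rintro ⟨hαE, hΔαE, hrel⟩
    refine ⟨hβ, fun J' hne hnuniv => ?_⟩
    rw [Set.eq_empty_iff_forall_notMem]
    intro w hwmem
    obtain ⟨hwG, hweq, hwgt⟩ := hwmem
    have hwE : Delta (γ - w - 1) E = ∅ := by
      have h := hwG
      rw [hdual] at h
      exact h
    obtain ⟨i₀, hi₀⟩ := Finset.nonempty_iff_ne_empty.mpr hne
    set J'' : Finset (Fin p) := J'ᶜ ∪ {i₀} with hJ''def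
    have hdisj : Disjoint J'ᶜ ({i₀} : Finset (Fin p)) := by
      rw [Finset.disjoint_singleton_right, Finset.mem_compl]
      exact fun h => h hi₀
    have hcne : J'ᶜ.Nonempty := by
      rw [Finset.nonempty_iff_ne_empty]
      intro h
      exact hnuniv ((Finset.compl_eq_empty_iff J').mp h)
    have hcard : 2 ≤ J''.card := by
      rw [hJ''def, Finset.card_union_of_disjoint hdisj, Finset.card_singleton]
      have := Finset.card_pos.mpr hcne
      omega
    obtain ⟨η, hηE, hηeq, hηgt⟩ := hrel J'' hcard
    have hmem : η ∈ Delta (γ - w - 1) E := by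
      rw [Delta, Set.mem_iUnion]
      refine ⟨i₀, hηE, ?_, ?_⟩
      · intro j hj
        rw [Finset.mem_singleton] at hj
        subst hj
        have hη : η j = α j := hηeq j (by rw [hJ''def]; simp)
        have hw : w j = β j := hweq j hi₀
        have := hsum' j
        simp only [Pi.sub_apply, Pi.one_apply]
        omega
      · intro j hj
        rw [Finset.mem_singleton] at hj
        simp only [Pi.sub_apply, Pi.one_apply]
        by_cases hjJ' : j ∈ J'
        · have hη : α j < η j := by
            refine hηgt j ?_
            rw [hJ''def]
            simp only [Finset.mem_union, Finset.mem_compl, Finset.mem_singleton]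
            push_neg
            exact ⟨hjJ', hj⟩
          have hw : w j = β j := hweq j hjJ'
          have := hsum' j
          omega
        · have hη : η j = α j := hηeq j (by rw [hJ''def]; simp [hjJ'])
          have hw : β j < w j := hwgt j hjJ'
          have := hsum' j
          omega
    rw [hwE] at hmem
    exact hmem
end

section
/- (Generation theorem.) Let E ⊆ ℤ^p be a good semigroup ideal with set of relative maximals RM(E). Let v ∈ ℤ^p be such that for every J ⊆ {1,…,p} with |J| = p − 1, the projection pr_J(v) lies in pr_J(E). Then v ∈ E if and only if for every relative maximal α ∈ RM(E), v ∉ Δ(α, ℤ^p). -/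
/-!
If `v ∉ E`, inf-closedness yields a coordinate `g` such that no element of `E` that agrees with `v`
at `g` lies above `v`; the hypothesis on projections then gives, for each `l ≠ g`, an element of
`E` that agrees with `v` off `l` and lies below it at `l`. Two minimality arguments in finite boxes
produce `β ∈ E` with `β_g = v_g`, `β < v` off `g`, `Δ_g(β, E) = ∅` and `Δ_{g,l}(β, E) ≠ ∅` for all
`l ≠ g`. Axiom (E2) turns this into `Δ(β, E) = ∅`, and infima of the `Δ_{g,l}` witnesses give
`Δ_J(β, E) ≠ ∅` for `|J| ≥ 2`; so `β` is a relative maximal with `v ∈ Δ_g(β, ℤ^p)`. Conversely,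
`Δ(α, E) = Δ(α, ℤ^p) ∩ E`.
-/

open Finset

open Function
open scoped symmDiff

def SatisfiesE2 {p : ℕ} (E : Set (Fin p → ℤ)) : Prop :=
  ∀ a ∈ E, ∀ b ∈ E, a ≠ b → ∀ i, a i = b i →
    ∃ η ∈ E, a i < η i ∧ (∀ j, min (a j) (b j) ≤ η j) ∧
      ∀ j, a j ≠ b j → η j = min (a j) (b j)

lemma InfClosed.mem_of_forall_exists_le_apply_eq {ι α : Type*} [Fintype ι] [Nonempty ι]
    [SemilatticeInf α] {E : Set (ι → α)} (hE : InfClosed E) {v : ι → α}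
    (h : ∀ i, ∃ ξ ∈ E, v ≤ ξ ∧ ξ i = v i) : v ∈ E := by
  choose ξ hξE hvξ hξv using h
  convert hE.finsetInf'_mem univ_nonempty fun i _ => hξE i
  funext j
  rw [Finset.inf'_apply]
  exact le_antisymm (Finset.le_inf' _ _ fun i _ => hvξ i j)
    ((Finset.inf'_le _ (mem_univ j)).trans (hξv j).le)

section DeltaJ

variable {p : ℕ} {E : Set (Fin p → ℤ)} {J K : Finset (Fin p)} {α β x y : Fin p → ℤ}

lemma mem_deltaJ_singleton {i : Fin p} :
    x ∈ DeltaJ {i} α E ↔ x ∈ E ∧ x i = α i ∧ ∀ j ≠ i, α j < x j := by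
  simp only [DeltaJ, Set.mem_ofPred_eq, Finset.mem_singleton, forall_eq, ne_eq]

lemma mem_deltaJ_pair {i k : Fin p} :
    x ∈ DeltaJ {i, k} α E ↔ x ∈ E ∧ x i = α i ∧ x k = α k ∧ ∀ j, j ≠ i → j ≠ k → α j < x j := by
  simp only [DeltaJ, Set.mem_ofPred_eq, Finset.mem_insert, Finset.mem_singleton,
    forall_eq_or_imp, forall_eq, not_or, and_imp, ne_eq, and_assoc]

lemma le_of_mem_deltaJ (hx : x ∈ DeltaJ J α E) : α ≤ x := fun j =>
  if hj : j ∈ J then (hx.2.1 j hj).ge else (hx.2.2 j hj).le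

lemma mem_iff_apply_eq_of_mem_deltaJ (hx : x ∈ DeltaJ J α E) (j : Fin p) :
    j ∈ J ↔ x j = α j :=
  ⟨hx.2.1 j, fun h => by_contra fun hj => (hx.2.2 j hj).ne' h⟩

lemma deltaJ_subset_deltaJ (hαβ : α ≤ β) (hJ : ∀ j ∈ J, α j = β j) :
    DeltaJ J β E ⊆ DeltaJ J α E := fun _ ⟨hxE, hxJ, hx⟩ =>
  ⟨hxE, fun j hj => (hxJ j hj).trans (hJ j hj).symm, fun j hj => (hαβ j).trans_lt (hx j hj)⟩

lemma inf_mem_deltaJ_union (hE : InfClosed E) (hx : x ∈ DeltaJ J α E)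
    (hy : y ∈ DeltaJ K α E) : x ⊓ y ∈ DeltaJ (J ∪ K) α E := by
  refine ⟨hE hx.1 hy.1, fun j hj => ?_, fun j hj => ?_⟩
  · rcases Finset.mem_union.1 hj with hj | hj
    · simpa [hx.2.1 j hj] using le_of_mem_deltaJ hy j
    · simpa [hy.2.1 j hj] using le_of_mem_deltaJ hx j
  · rw [Finset.mem_union, not_or] at hj
    exact lt_min (hx.2.2 j hj.1) (hy.2.2 j hj.2)

/-- (E2) applied to `x`, `y` at `i` gives `η` above `α` at `i`, equal to `min x y = α` on `J ∆ K`
and at least `min x y > α` off `J ∪ K`. -/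
lemma SatisfiesE2.deltaJ_symmDiff_nonempty (hE2 : SatisfiesE2 E) {i : Fin p}
    (hx : x ∈ DeltaJ J α E) (hy : y ∈ DeltaJ K α E) (hJK : J ∩ K = {i}) (hne : J ≠ K) :
    (DeltaJ (J ∆ K) α E).Nonempty := by
  have hxy : x ≠ y := by
    rintro rfl
    exact hne (Finset.ext fun j =>
      (mem_iff_apply_eq_of_mem_deltaJ hx j).trans (mem_iff_apply_eq_of_mem_deltaJ hy j).symm)
  have hiJK : i ∈ J ∩ K := hJK ▸ Finset.mem_singleton_self i
  have hxi : x i = α i := hx.2.1 i (Finset.mem_inter.1 hiJK).1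
  obtain ⟨η, hηE, hηi, hη_ge, hη_eq⟩ :=
    hE2 x hx.1 y hy.1 hxy i (hxi.trans (hy.2.1 i (Finset.mem_inter.1 hiJK).2).symm)
  refine ⟨η, hηE, fun j hj => ?_, fun j hj => ?_⟩
  · have hαx : α j ≤ x j := le_of_mem_deltaJ hx j
    have hαy : α j ≤ y j := le_of_mem_deltaJ hy j
    simp only [Finset.mem_symmDiff, mem_iff_apply_eq_of_mem_deltaJ hx,
      mem_iff_apply_eq_of_mem_deltaJ hy] at hj
    rcases hj with ⟨hxj, hyj⟩ | ⟨hyj, hxj⟩ <;> rw [hη_eq j (by omega)] <;> omega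
  · by_cases hjJK : j ∈ J ∩ K
    · rw [hJK, Finset.mem_singleton] at hjJK
      subst hjJK
      exact hxi ▸ hηi
    · have hjJ : j ∉ J := fun hjJ => hj (Finset.mem_symmDiff.2 (Or.inl ⟨hjJ, fun hjK =>
        hjJK (Finset.mem_inter.2 ⟨hjJ, hjK⟩)⟩))
      have hjK : j ∉ K := fun hjK => hj (Finset.mem_symmDiff.2 (Or.inr ⟨hjK, hjJ⟩))
      exact (lt_min (hx.2.2 j hjJ) (hy.2.2 j hjK)).trans_le (hη_ge j)

lemma deltaJ_insert_nonempty_of_forall_pair (hE : InfClosed E)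
    (hpair : ∀ a b, a ≠ b → (DeltaJ {a, b} α E).Nonempty) (hJ : J.Nonempty) :
    ∀ a ∉ J, (DeltaJ (insert a J) α E).Nonempty := by
  induction hJ using Finset.Nonempty.cons_induction with
  | singleton b => exact fun a ha => hpair a b (Finset.notMem_singleton.1 ha)
  | cons b s hb hs ih =>
    intro a ha
    rw [Finset.mem_cons, not_or] at ha
    obtain ⟨x, hx⟩ := ih a ha.2
    obtain ⟨y, hy⟩ := hpair a b ha.1
    refine ⟨x ⊓ y, ?_⟩
    convert inf_mem_deltaJ_union hE hx hy using 2
    ext j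
    simp only [Finset.mem_insert, Finset.mem_cons, Finset.mem_union, Finset.mem_singleton]
    tauto

lemma deltaJ_nonempty_of_forall_pair (hE : InfClosed E)
    (hpair : ∀ a b, a ≠ b → (DeltaJ {a, b} α E).Nonempty) (hJ : 2 ≤ J.card) :
    (DeltaJ J α E).Nonempty := by
  obtain ⟨a, ha⟩ := Finset.card_pos.1 (by omega : 0 < J.card)
  have hJa : (J.erase a).Nonempty := by
    rw [← Finset.card_pos, Finset.card_erase_of_mem ha]; omega
  simpa [Finset.insert_erase ha] using
    deltaJ_insert_nonempty_of_forall_pair hE hpair hJa a (Finset.notMem_erase a J)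

lemma relMax_of_deltaJ_singleton_eq_empty (hE : InfClosed E) (hE2 : SatisfiesE2 E)
    {g : Fin p} (hβ : β ∈ E) (hg : DeltaJ {g} β E = ∅)
    (hpair : ∀ l ≠ g, (DeltaJ {g, l} β E).Nonempty) : RelMax E β := by
  have hdelta : Delta β E = ∅ := by
    refine Set.eq_empty_of_forall_notMem fun x hx => ?_
    obtain ⟨i, hx⟩ := Set.mem_iUnion.1 hx
    rcases eq_or_ne i g with rfl | hig
    · exact hg.subset hx
    obtain ⟨ζ, hζ⟩ := hpair i hig
    have hsymm : ({i} : Finset (Fin p)) ∆ {g, i} = {g} := by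
      ext j; simp only [Finset.mem_symmDiff, Finset.mem_insert, Finset.mem_singleton]; grind
    obtain ⟨η, hη⟩ := hE2.deltaJ_symmDiff_nonempty (i := i) hx hζ (by simp [hig])
      (by simp [Finset.ext_iff, hig.symm])
    exact hg.subset (hsymm ▸ hη)
  refine ⟨hβ, hdelta, fun J hJ => deltaJ_nonempty_of_forall_pair hE (fun a b hab => ?_) hJ⟩
  rcases eq_or_ne a g with rfl | hag
  · exact hpair b hab.symm
  rcases eq_or_ne b g with rfl | hbg
  · exact Finset.pair_comm a b ▸ hpair a hab
  obtain ⟨x, hx⟩ := hpair a hag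
  obtain ⟨y, hy⟩ := hpair b hbg
  have hsymm : ({g, a} : Finset (Fin p)) ∆ {g, b} = {a, b} := by
    ext j; simp only [Finset.mem_symmDiff, Finset.mem_insert, Finset.mem_singleton]; grind
  have hne : ({g, a} : Finset (Fin p)) ≠ {g, b} := fun h => by
    have : a ∈ ({g, b} : Finset (Fin p)) := h ▸ by simp
    simp_all
  exact hsymm ▸ hE2.deltaJ_symmDiff_nonempty (i := g) hx hy
    (by ext j; simp only [Finset.mem_inter, Finset.mem_insert, Finset.mem_singleton]; grind) hne

end DeltaJ

section Candidates

variable {p : ℕ} {E : Set (Fin p → ℤ)} {g : Fin p} {v lam α β τ : Fin p → ℤ}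

def candidates (E : Set (Fin p → ℤ)) (g : Fin p) (v : Fin p → ℤ) : Set (Fin p → ℤ) :=
  {α | v ∈ DeltaJ {g} α Set.univ ∧ DeltaJ {g} α E = ∅}

lemma mem_candidates :
    α ∈ candidates E g v ↔ α g = v g ∧ (∀ j ≠ g, α j < v j) ∧ DeltaJ {g} α E = ∅ := by
  simp only [candidates, Set.mem_ofPred_eq, mem_deltaJ_singleton, Set.mem_univ, true_and,
    eq_comm, and_assoc]

lemma le_of_mem_candidates (hα : α ∈ candidates E g v) : α ≤ v := fun j => by
  obtain ⟨hαg, hαv, -⟩ := mem_candidates.1 hα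
  rcases eq_or_ne j g with rfl | hjg
  exacts [hαg.le, (hαv j hjg).le]

lemma update_sub_one_mem_candidates (hg : ∀ ξ ∈ E, v ≤ ξ → ξ g ≠ v g) :
    update (v - 1) g (v g) ∈ candidates E g v := by
  refine mem_candidates.2 ⟨by simp, fun j hj => by simp [hj], ?_⟩
  refine Set.eq_empty_of_forall_notMem fun θ hθ => ?_
  obtain ⟨hθE, hθg, hθv⟩ := mem_deltaJ_singleton.1 hθ
  refine hg θ hθE (fun j => ?_) (by simpa using hθg)
  rcases eq_or_ne j g with rfl | hjg
  · simp [hθg]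
  · simpa [hjg, Int.sub_one_lt_iff] using hθv j hjg

lemma exists_update_lt_of_forall_ne (hg : ∀ ξ ∈ E, v ≤ ξ → ξ g ≠ v g) {l : Fin p} (hl : l ≠ g)
    (hw : ∃ w ∈ E, ∀ j ≠ l, w j = v j) : ∃ t < v l, update v l t ∈ E := by
  obtain ⟨w, hwE, hwv⟩ := hw
  have hw_eq : w = update v l (w l) := eq_update_iff.2 ⟨rfl, hwv⟩
  refine ⟨w l, lt_of_not_ge fun hvw => hg w hwE (fun j => ?_) (hwv g hl.symm), hw_eq ▸ hwE⟩
  rcases eq_or_ne j l with rfl | hjl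
  exacts [hvw, (hwv j hjl).ge]

lemma InfClosed.exists_ge_apply_lt [Nontrivial (Fin p)] (hE : InfClosed E)
    (hρ : ∀ l ≠ g, ∃ ρ ∈ E, τ ≤ ρ ∧ ρ g = τ g ∧ ρ l < v l) :
    ∃ β ∈ E, τ ≤ β ∧ β g = τ g ∧ ∀ l ≠ g, β l < v l := by
  choose! ρ hρE hτρ hρg hρv using hρ
  obtain ⟨l₀, hl₀⟩ := exists_ne g
  have hne : (univ.erase g).Nonempty := ⟨l₀, by simpa using hl₀⟩
  have hτβ : τ ≤ (univ.erase g).inf' hne ρ :=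
    Finset.le_inf' _ _ fun l hl => hτρ l (ne_of_mem_erase hl)
  refine ⟨_, hE.finsetInf'_mem hne fun l hl => hρE l (ne_of_mem_erase hl), hτβ,
    le_antisymm ?_ (hτβ g), fun l hl => ?_⟩
  · rw [Finset.inf'_apply]
    exact (Finset.inf'_le _ (by simpa using hl₀)).trans (hρg l₀ hl₀).le
  · rw [Finset.inf'_apply]
    exact (Finset.inf'_le _ (by simpa using hl)).trans_lt (hρv l hl)

lemma deltaJ_update_nonempty_of_minimal
    (hτ : Minimal (fun τ => τ ∈ candidates E g v ∧ lam ⊓ v - 1 ≤ τ) τ) {l : Fin p} (hl : l ≠ g)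
    (hτl : lam l ≤ τ l) : (DeltaJ {g} (update τ l (τ l - 1)) E).Nonempty := by
  obtain ⟨hτg, hτv, -⟩ := mem_candidates.1 hτ.1.1
  by_contra h
  refine hτ.not_lt ⟨mem_candidates.2 ⟨by simp [hl.symm, hτg], fun j hj => ?_,
    Set.not_nonempty_iff_eq_empty.1 h⟩, fun m => ?_⟩ (update_lt_self_iff.2 (sub_one_lt _))
  · rcases eq_or_ne j l with rfl | hjl
    · simpa using (sub_one_lt _).trans (hτv j hj)
    · simpa [hjl] using hτv j hj
  · rcases eq_or_ne m l with rfl | hml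
    · simp only [update_self, Pi.sub_apply, Pi.inf_apply, Pi.one_apply]
      omega
    · simpa [hml] using hτ.1.2 m

/-- Each coordinate `l ≠ g` of a minimal candidate in the box above `lam ⊓ v - 1` is attained from
above by an element of `E`: by `update v l t` when `τ l` sits at the bottom of the box, and
otherwise by a witness of `Δ_g ≠ ∅` for `τ` lowered at `l`. -/
lemma exists_le_of_minimal (hlam : ∀ x ∈ E, lam ≤ x)
    (hw : ∀ l ≠ g, ∃ t < v l, update v l t ∈ E)
    (hτ : Minimal (fun τ => τ ∈ candidates E g v ∧ lam ⊓ v - 1 ≤ τ) τ) {l : Fin p} (hl : l ≠ g) :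
    ∃ ρ ∈ E, τ ≤ ρ ∧ ρ g = τ g ∧ ρ l < v l := by
  obtain ⟨hτg, hτv, hτE⟩ := mem_candidates.1 hτ.1.1
  by_cases hτl : τ l < lam l
  · obtain ⟨t, ht, htE⟩ := hw l hl
    refine ⟨update v l t, htE, fun m => ?_, by simp [hl.symm, hτg], by simpa⟩
    rcases eq_or_ne m l with rfl | hml
    · exact hτl.le.trans (hlam _ htE m)
    · simpa [hml] using le_of_mem_candidates hτ.1.1 m
  obtain ⟨θ, hθ⟩ := deltaJ_update_nonempty_of_minimal hτ hl (not_lt.1 hτl)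
  obtain ⟨hθE, hθg, hθτ⟩ := mem_deltaJ_singleton.1 hθ
  simp only [update_of_ne hl.symm] at hθg
  have hτθ : τ ≤ θ := fun m => by
    rcases eq_or_ne m g with rfl | hmg
    · exact hθg.ge
    rcases eq_or_ne m l with rfl | hml
    · simpa [Int.sub_one_lt_iff] using hθτ m hmg
    · simpa [hml] using (hθτ m hmg).le
  have hθl : θ l ≤ τ l := not_lt.1 fun h => (Set.eq_empty_iff_forall_notMem.1 hτE) θ
    (mem_deltaJ_singleton.2 ⟨hθE, hθg, fun m hm => (hτθ m).lt_of_ne fun hm' => by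
      rcases eq_or_ne m l with rfl | hml
      · exact h.ne hm'
      · exact (hθτ m hm).ne (by simp [hml, hm'])⟩)
  exact ⟨θ, hθE, hτθ, hθg, hθl.trans_lt (hτv l hl)⟩

lemma inter_candidates_nonempty [Nontrivial (Fin p)] (hE : InfClosed E)
    (hlam : ∀ x ∈ E, lam ≤ x) (hg : ∀ ξ ∈ E, v ≤ ξ → ξ g ≠ v g)
    (hw : ∀ l ≠ g, ∃ t < v l, update v l t ∈ E) : (E ∩ candidates E g v).Nonempty := by
  set S := {τ | τ ∈ candidates E g v ∧ lam ⊓ v - 1 ≤ τ}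
  have hS_fin : S.Finite := (Set.finite_Icc (lam ⊓ v - 1) v).subset fun τ hτ =>
    ⟨hτ.2, le_of_mem_candidates hτ.1⟩
  have hS_ne : S.Nonempty := ⟨_, update_sub_one_mem_candidates hg, fun j => by
    rcases eq_or_ne j g with rfl | hjg
    · simp only [update_self, Pi.sub_apply, Pi.inf_apply, Pi.one_apply]; omega
    · simp only [update_of_ne hjg, Pi.sub_apply, Pi.inf_apply, Pi.one_apply]; omega⟩
  obtain ⟨τ, hτ⟩ := hS_fin.exists_minimal hS_ne
  obtain ⟨β, hβE, hτβ, hβg, hβv⟩ :=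
    hE.exists_ge_apply_lt fun l hl => exists_le_of_minimal hlam hw hτ hl
  obtain ⟨hτg, -, hτE⟩ := mem_candidates.1 hτ.1.1
  refine ⟨β, hβE, mem_candidates.2 ⟨hβg.trans hτg, hβv, Set.subset_eq_empty
    (deltaJ_subset_deltaJ hτβ (by simpa using hβg.symm)) hτE⟩⟩

/-- Among the elements of `E` above `β` off `{g, l}` and equal to `β` at `g`, one with the largest
`l`-th coordinate `t` satisfies `t ≤ β l` (as `Δ_g(β, E) = ∅`), and `β ⊓ ζ` is again a candidate,
so minimality of `β` forces `t = β l`. -/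
lemma deltaJ_pair_nonempty_of_minimal (hE : InfClosed E)
    (hw : ∀ l ≠ g, ∃ t < v l, update v l t ∈ E)
    (hβ : Minimal (· ∈ E ∩ candidates E g v) β) {l : Fin p} (hl : l ≠ g) :
    (DeltaJ {g, l} β E).Nonempty := by
  obtain ⟨⟨hβE, hβc⟩, hβ_min⟩ := hβ
  obtain ⟨hβg, hβv, hβΔ⟩ := mem_candidates.1 hβc
  set T : ℤ → Prop := fun t => ∃ ζ ∈ E, ζ g = β g ∧ ζ l = t ∧ ∀ m, m ≠ g → m ≠ l → β m < ζ m
  have hT_le : ∀ t, T t → t ≤ β l := fun t ⟨ζ, hζE, hζg, hζl, hζ⟩ => not_lt.1 fun h =>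
    (Set.eq_empty_iff_forall_notMem.1 hβΔ) ζ (mem_deltaJ_singleton.2 ⟨hζE, hζg, fun m hm => by
      rcases eq_or_ne m l with rfl | hml
      exacts [hζl ▸ h, hζ m hm hml]⟩)
  have hT_ne : ∃ t, T t := by
    obtain ⟨t, -, htE⟩ := hw l hl
    exact ⟨t, _, htE, by simp [hl.symm, hβg], by simp,
      fun m hmg hml => by simpa [hml] using hβv m hmg⟩
  obtain ⟨t, ⟨ζ, hζE, hζg, hζl, hζ⟩, ht_max⟩ := Int.exists_greatest_of_bdd ⟨_, hT_le⟩ hT_ne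
  have htβ : t ≤ β l := hT_le t ⟨ζ, hζE, hζg, hζl, hζ⟩
  have hβζ : β ⊓ ζ ∈ E ∩ candidates E g v := by
    refine ⟨hE hβE hζE, mem_candidates.2 ⟨by simp [hζg, hβg], fun j hj =>
      (inf_le_left.trans_lt (hβv j hj) : min (β j) (ζ j) < v j), ?_⟩⟩
    refine Set.eq_empty_of_forall_notMem fun θ hθ => ?_
    obtain ⟨hθE, hθg, hθ⟩ := mem_deltaJ_singleton.1 hθ
    have hθl : t < θ l := by simpa [hζl, htβ] using hθ l hl
    refine hθl.not_ge (ht_max _ ⟨θ, hθE, by simpa [hζg] using hθg, rfl, fun m hmg hml => ?_⟩)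
    simpa [(hζ m hmg hml).le] using hθ m hmg
  have hβt : β l ≤ t := hζl ▸ (hβ_min hβζ inf_le_left l).trans inf_le_right
  exact ⟨ζ, mem_deltaJ_pair.2 ⟨hζE, hζg, hζl.trans (le_antisymm htβ hβt), hζ⟩⟩

lemma exists_relMax_mem_delta_univ [Nontrivial (Fin p)] (hE : InfClosed E) (hE2 : SatisfiesE2 E)
    (hlam : ∀ x ∈ E, lam ≤ x) (hg : ∀ ξ ∈ E, v ≤ ξ → ξ g ≠ v g)
    (hw : ∀ l ≠ g, ∃ t < v l, update v l t ∈ E) :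
    ∃ β, RelMax E β ∧ v ∈ Delta β Set.univ := by
  have hfin : (E ∩ candidates E g v).Finite :=
    (Set.finite_Icc lam v).subset fun β hβ => ⟨hlam β hβ.1, le_of_mem_candidates hβ.2⟩
  obtain ⟨β, hβ⟩ := hfin.exists_minimal (inter_candidates_nonempty hE hlam hg hw)
  obtain ⟨hβv, hβΔ⟩ := hβ.1.2
  exact ⟨β, relMax_of_deltaJ_singleton_eq_empty hE hE2 hβ.1.1 hβΔ
    fun l hl => deltaJ_pair_nonempty_of_minimal hE hw hβ hl, Set.mem_iUnion.2 ⟨g, hβv⟩⟩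

end Candidates

theorem stmt10 {p : ℕ} (hp : 2 ≤ p) (E : Set (Fin p → ℤ)) (hE : GoodIdeal E)
    (v : Fin p → ℤ)
    (hpr : ∀ J : Finset (Fin p), J.card = p - 1 → ∃ w ∈ E, ∀ j ∈ J, w j = v j) :
    v ∈ E ↔ ∀ α, RelMax E α → v ∉ Delta α Set.univ := by
  obtain ⟨⟨lam, -, hlam, -⟩, hinf, hE2⟩ := hE
  have hE : InfClosed E := fun a ha b hb => hinf a ha b hb
  refine ⟨fun hv α hα hvα => ?_, fun h => by_contra fun hv => ?_⟩
  · obtain ⟨i, -, hvα⟩ := Set.mem_iUnion.1 hvα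
    exact (Set.eq_empty_iff_forall_notMem.1 hα.2.1) v (Set.mem_iUnion.2 ⟨i, hv, hvα⟩)
  have : Nontrivial (Fin p) := Fin.nontrivial_iff_two_le.2 hp
  obtain ⟨g, hg⟩ : ∃ g, ∀ ξ ∈ E, v ≤ ξ → ξ g ≠ v g := by
    by_contra! h
    exact hv (hE.mem_of_forall_exists_le_apply_eq h)
  have hw : ∀ l ≠ g, ∃ t < v l, update v l t ∈ E := fun l hl =>
    exists_update_lt_of_forall_ne hg hl <| (hpr (univ.erase l) (by simp)).imp
      fun w ⟨hwE, hwv⟩ => ⟨hwE, fun j hj => hwv j (by simpa using hj)⟩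
  obtain ⟨β, hβ, hvβ⟩ := exists_relMax_mem_delta_univ hE hE2 hlam hg hw
  exact h β hβ hvβ
end

section
/- Let S ⊆ ℤ^p and E ⊆ ℤ^p satisfy S + E ⊆ E. Let v ∈ E be an absolute maximal of E, and suppose v = α + β with α ∈ S and β ∈ E. Then β is an absolute maximal of E. -/
open Finset

theorem stmt11 {p : ℕ} (hp : 2 ≤ p) (S E : Set (Fin p → ℤ))
    (hSE : ∀ a ∈ S, ∀ b ∈ E, a + b ∈ E) (v : Fin p → ℤ) (hv : AbsMax E v)
    (α β : Fin p → ℤ) (hα : α ∈ S) (hβ : β ∈ E) (hsum : v = α + β) :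
    AbsMax E β := by
  refine ⟨hβ, fun J hJ hJu => ?_⟩
  ext w
  simp only [Set.mem_empty_iff_false, iff_false]
  rintro ⟨hwE, hweq, hwgt⟩
  have : α + w ∈ DeltaJ J v E := by
    refine ⟨hSE α hα w hwE, fun j hj => ?_, fun j hj => ?_⟩
    · simp [hsum, Pi.add_apply, hweq j hj]
    · have := hwgt j hj
      simp only [hsum, Pi.add_apply]
      linarith
  have h := (hv.2 J hJ hJu)
  rw [h] at this
  exact this
end

section
/- Let E ⊆ ℤ^p be a good semigroup ideal, ν ∈ ℤ^p with ν + ℕ^p ⊆ E, i ∈ {1,…,p}, c ∈ ℤ, and define F = {v ∈ E | v_i = c and v_ℓ ≤ ν_ℓ for all ℓ ≠ i}. Let α ∈ F. Then α is an absolute maximal of E if and only if α_ℓ ≠ ν_ℓ for all ℓ ∈ {1,…,p} and α is a maximal element of F for the componentwise order. -/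
/-!
An absolute maximal `α` lies strictly below `nu` in every coordinate: otherwise a point above
`nu` that agrees with `α` only in coordinate `l` lies in `Δ_{l}(α, E)`. It is maximal
in `F` since any `α' ∈ F` above `α` lies in `Δ_J(α, E)` for `J` the set of coordinates where
they agree, and `i ∈ J`.

Conversely, an element of some `Δ_J(α, E)` yields a point `u ∈ E` with `α < u` and `u i = α i`:
the element itself if `i ∈ J`, otherwise the point that (E2) produces from `α` and it at a
coordinate of `J`. Then `u ⊓ (nu ⊔ α)` lies in `F` above `α`, and it still differs from `α`
because `α < nu` off `i`, contradicting maximality.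
-/

open Finset

namespace AbsMax

variable {p : ℕ} {E : Set (Fin p → ℤ)} {α : Fin p → ℤ}

theorem eq_of_le_of_apply_eq (h : AbsMax E α) {α' : Fin p → ℤ} (hα' : α' ∈ E) (hle : α ≤ α')
    {i : Fin p} (hi : α' i = α i) : α = α' := by
  by_contra hne
  let J : Finset (Fin p) := univ.filter fun j => α j = α' j
  obtain ⟨k, hk⟩ : ∃ k, α k ≠ α' k := Function.ne_iff.mp hne
  have hJ : J ≠ ∅ := ne_empty_of_mem (a := i) (by simp [J, hi])
  have hJu : J ≠ univ := fun h => hk (by simpa [J] using eq_univ_iff_forall.mp h k)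
  refine (h.2 J hJ hJu).subset ⟨hα', fun j hj => ?_, fun j hj => ?_⟩
  · exact ((mem_filter.mp hj).2).symm
  · exact lt_of_le_of_ne (hle j) (by simpa [J] using hj)

theorem apply_lt (h : AbsMax E α) (hp : 2 ≤ p) {nu : Fin p → ℤ} (hnu : ∀ v, nu ≤ v → v ∈ E)
    (l : Fin p) : α l < nu l := by
  by_contra! hl
  let w : Fin p → ℤ := Function.update (nu ⊔ α + 1) l (α l)
  have hwE : w ∈ E := hnu w fun k => by
    rcases eq_or_ne k l with rfl | hk
    · simpa [w] using hl
    · simp only [w, Function.update_of_ne hk, Pi.add_apply, Pi.sup_apply, Pi.one_apply]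
      omega
  obtain ⟨m, hm⟩ := Fintype.exists_ne_of_one_lt_card (by simp; omega) l
  have hJu : ({l} : Finset (Fin p)) ≠ univ := fun h =>
    hm (by simpa using eq_univ_iff_forall.mp h m)
  refine (h.2 {l} (singleton_ne_empty l) hJu).subset ⟨hwE, fun j hj => ?_, fun j hj => ?_⟩
  · simp [mem_singleton.mp hj, w]
  · simp only [w, Function.update_of_ne (notMem_singleton.mp hj), Pi.add_apply, Pi.sup_apply,
      Pi.one_apply]
    omega

end AbsMax

theorem exists_gt_apply_eq_of_mem_deltaJ {p : ℕ} {E : Set (Fin p → ℤ)} (hE : GoodIdeal E)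
    {α w : Fin p → ℤ} (hα : α ∈ E) {J : Finset (Fin p)} (hJ : J ≠ ∅) (hJu : J ≠ univ)
    (hw : w ∈ DeltaJ J α E) (i : Fin p) : ∃ u ∈ E, α < u ∧ u i = α i := by
  obtain ⟨hwE, hwJ, hwJc⟩ := hw
  obtain ⟨k, hk⟩ : ∃ k, k ∉ J := by simpa [eq_univ_iff_forall] using hJu
  have hαw : α ≤ w := fun l => by
    by_cases hl : l ∈ J
    · exact (hwJ l hl).ge
    · exact (hwJc l hl).le
  have hne : α ≠ w := fun h => (hwJc k hk).ne (by rw [h])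
  by_cases hi : i ∈ J
  · exact ⟨w, hwE, lt_of_le_of_ne hαw hne, hwJ i hi⟩
  obtain ⟨j, hj⟩ := nonempty_iff_ne_empty.mpr hJ
  obtain ⟨η, hηE, hηj, hηmin, hηeq⟩ := hE.2.2 α hα w hwE hne j (hwJ j hj).symm
  have hαη : α ≤ η := fun l => by simpa [min_eq_left (hαw l)] using hηmin l
  refine ⟨η, hηE, lt_of_le_of_ne hαη fun h => (h ▸ hηj).false, ?_⟩
  simpa [min_eq_left (hαw i)] using hηeq i (hwJc i hi).ne

theorem eq_of_le_of_apply_eq_of_maximal_slice {p : ℕ} {E : Set (Fin p → ℤ)} (hE : GoodIdeal E)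
    {nu : Fin p → ℤ} (hnu : ∀ v, nu ≤ v → v ∈ E) {α : Fin p → ℤ} {i : Fin p}
    (hαnu : ∀ l, l ≠ i → α l < nu l)
    (hmax : ∀ v ∈ E, v i = α i → (∀ l, l ≠ i → v l ≤ nu l) → α ≤ v → α = v)
    {u : Fin p → ℤ} (hu : u ∈ E) (hαu : α ≤ u) (hui : u i = α i) : u = α := by
  have hcut := hmax (u ⊓ (nu ⊔ α)) (hE.2.1 u hu _ (hnu _ le_sup_left))
    (by simp [hui]) (fun l hl => by simp [(hαnu l hl).le]) (le_inf hαu le_sup_right)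
  funext l
  have hl := congrFun hcut l
  rcases eq_or_ne l i with rfl | hli
  · exact hui
  · have := hαnu l hli
    simp only [Pi.inf_apply, Pi.sup_apply] at hl
    omega

theorem stmt13 {p : ℕ} (hp : 2 ≤ p) (E : Set (Fin p → ℤ)) (hE : GoodIdeal E)
    (nu : Fin p → ℤ) (hnu : ∀ v, nu ≤ v → v ∈ E) (i : Fin p) (c : ℤ)
    (F : Set (Fin p → ℤ))
    (hF : F = {v | v ∈ E ∧ v i = c ∧ ∀ l, l ≠ i → v l ≤ nu l})
    (α : Fin p → ℤ) (hα : α ∈ F) :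
    AbsMax E α ↔ ((∀ l, α l ≠ nu l) ∧ ∀ α' ∈ F, α ≤ α' → α = α') := by
  subst hF
  obtain ⟨hαE, rfl, hαnu⟩ := hα
  constructor
  · intro h
    exact ⟨fun l => (h.apply_lt hp hnu l).ne,
      fun α' ⟨hα'E, hα'i, _⟩ hle => h.eq_of_le_of_apply_eq hα'E hle hα'i⟩
  · rintro ⟨hne, hmax⟩
    refine ⟨hαE, fun J hJ hJu => Set.eq_empty_iff_forall_notMem.mpr fun w hw => ?_⟩
    obtain ⟨u, huE, hαu, hui⟩ := exists_gt_apply_eq_of_mem_deltaJ hE hαE hJ hJu hw i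
    exact hαu.ne' <| eq_of_le_of_apply_eq_of_maximal_slice hE hnu
      (fun l hl => lt_of_le_of_ne (hαnu l hl) (hne l))
      (fun v hv hvi hvnu => hmax v ⟨hv, hvi, hvnu⟩) huE hαu.le hui
end

section
/- Let E ⊆ ℤ^p satisfy ν + ℕ^p ⊆ E for some ν ∈ ℤ^p, and assume t^ν-translates fill E above ν in the sense ν + ℕ^p ⊆ E. If β ∈ E is an absolute maximal of E, then β_ℓ ≤ ν_ℓ − 1 for every ℓ ∈ {1,…,p}. -/
open Finset

theorem stmt14 {p : ℕ} (hp : 2 ≤ p) (E : Set (Fin p → ℤ)) (nu : Fin p → ℤ)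
    (hnu : ∀ v, nu ≤ v → v ∈ E) (β : Fin p → ℤ) (hβ : AbsMax E β) :
    ∀ l, β l ≤ nu l - 1 := by
  intro l
  by_contra h
  push_neg at h
  have hl : nu l ≤ β l := by omega
  set v : Fin p → ℤ := fun j => if j = l then β l else max (β j) (nu j) + 1 with hv
  have hvE : v ∈ E := by
    apply hnu
    intro j
    by_cases hj : j = l
    · subst hj; simp [hv, hl]
    · simp [hv, hj]; omega
  have hJne : ({l} : Finset (Fin p)) ≠ ∅ := by simp
  have hJnu : ({l} : Finset (Fin p)) ≠ Finset.univ := by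
    intro hEq
    have := Finset.card_univ (α := Fin p) ▸ congrArg Finset.card hEq
    simp [Fintype.card_fin] at this
    omega
  have := hβ.2 {l} hJne hJnu
  have hvD : v ∈ DeltaJ {l} β E := by
    refine ⟨hvE, ?_, ?_⟩
    · intro j hj
      simp at hj
      simp [hv, hj]
    · intro j hj
      simp at hj
      simp [hv, hj]
  rw [this] at hvD
  exact hvD
end

section
/- Let E ⊆ ℤ^p be a good semigroup ideal, γ ∈ ℤ^p, and let E^∨ = {v ∈ ℤ^p | Δ(γ − v − 1, E) = ∅}. Suppose β ∈ E^∨ and α = γ − β − 1 ∈ E is not a relative maximal of E. Then there exists j ∈ {1,…,p}, j ≠ 1 (after possibly renumbering, for some pair of distinct indices i ≠ j) such that Δ_{{i,j}}(α, E) = ∅ for some i, and consequently every v ∈ ℤ^p with v_i = β_i, v_j = β_j, and v_ℓ < β_ℓ for all ℓ ∉ {i,j} satisfies Δ(v, E^∨) ≠ ∅. -/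
open Finset

namespace Stmt16Aux

variable {q : ℕ} {E : Set (Fin q → ℤ)} {α : Fin q → ℤ}

abbrev E2Prop (E : Set (Fin q → ℤ)) : Prop :=
  ∀ a ∈ E, ∀ b ∈ E, a ≠ b → ∀ i, a i = b i →
    ∃ η ∈ E, a i < η i ∧ (∀ j, min (a j) (b j) ≤ η j) ∧
      ∀ j, a j ≠ b j → η j = min (a j) (b j)

lemma deltaJ_ge {J : Finset (Fin q)} {v : Fin q → ℤ} (h : v ∈ DeltaJ J α E) (k : Fin q) :
    α k ≤ v k := by
  by_cases hk : k ∈ J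
  · exact (h.2.1 k hk).ge
  · exact (h.2.2 k hk).le

lemma deltaJ_union (hE1 : ∀ a ∈ E, ∀ b ∈ E, a ⊓ b ∈ E)
    {J J' : Finset (Fin q)} (h : (DeltaJ J α E).Nonempty) (h' : (DeltaJ J' α E).Nonempty) :
    (DeltaJ (J ∪ J') α E).Nonempty := by
  obtain ⟨θ, hθ⟩ := h
  obtain ⟨φ, hφ⟩ := h'
  refine ⟨θ ⊓ φ, hE1 _ hθ.1 _ hφ.1, ?_, ?_⟩
  · intro k hk
    rcases Finset.mem_union.1 hk with hk | hk
    · have h1 := hθ.2.1 k hk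
      have h2 := deltaJ_ge hφ k
      simp only [Pi.inf_apply]
      omega
    · have h1 := hφ.2.1 k hk
      have h2 := deltaJ_ge hθ k
      simp only [Pi.inf_apply]
      omega
  · intro k hk
    rw [Finset.mem_union] at hk
    push_neg at hk
    have h1 := hθ.2.2 k hk.1
    have h2 := hφ.2.2 k hk.2
    simp only [Pi.inf_apply]
    omega

/-- From an empty `DeltaJ J₀` with `2 ≤ J₀.card`, get an empty pair. -/
lemma pair_empty (hE1 : ∀ a ∈ E, ∀ b ∈ E, a ⊓ b ∈ E)
    (J₀ : Finset (Fin q)) (hcard : 2 ≤ J₀.card) (hempty : DeltaJ J₀ α E = ∅) :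
    ∃ i j : Fin q, i ≠ j ∧ DeltaJ {i, j} α E = ∅ := by
  by_contra hcon
  push_neg at hcon
  have hpairs : ∀ i j : Fin q, i ≠ j → (DeltaJ {i, j} α E).Nonempty := hcon
  have key : ∀ S : Finset (Fin q), ∀ a₀ : Fin q, a₀ ∉ S → S.Nonempty →
      (DeltaJ (insert a₀ S) α E).Nonempty := by
    intro S
    induction S using Finset.induction_on with
    | empty => intro a₀ _ h; exact absurd h (by simp)
    | @insert b S hb ih =>
      intro a₀ ha₀ _
      have ha₀b : a₀ ≠ b := by
        intro h; exact ha₀ (h ▸ Finset.mem_insert_self b S)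
      have ha₀S : a₀ ∉ S := fun h => ha₀ (Finset.mem_insert_of_mem h)
      by_cases hS : S.Nonempty
      · have h1 := ih a₀ ha₀S hS
        have h2 := hpairs a₀ b ha₀b
        have h3 := deltaJ_union hE1 h2 h1
        have : ({a₀, b} : Finset (Fin q)) ∪ insert a₀ S = insert a₀ (insert b S) := by
          ext x
          simp only [Finset.mem_union, Finset.mem_insert, Finset.mem_singleton]
          tauto
        rwa [this] at h3
      · have hSe : S = ∅ := Finset.not_nonempty_iff_eq_empty.1 hS
        subst hSe
        exact hpairs a₀ b ha₀b
  obtain ⟨a₀, ha₀⟩ := Finset.card_pos.1 (by omega : 0 < J₀.card)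
  have herase : (J₀.erase a₀).Nonempty := by
    rw [← Finset.card_pos, Finset.card_erase_of_mem ha₀]
    omega
  have := key (J₀.erase a₀) a₀ (Finset.notMem_erase a₀ J₀) herase
  rw [Finset.insert_erase ha₀] at this
  rw [hempty] at this
  exact Set.not_nonempty_empty this

lemma triangle (hE2 : E2Prop E) {a b c : Fin q} (hab : a ≠ b) (hac : a ≠ c) (hbc : b ≠ c)
    (h1 : (DeltaJ {a, b} α E).Nonempty) (h2 : (DeltaJ {a, c} α E).Nonempty) :
    (DeltaJ {b, c} α E).Nonempty := by
  obtain ⟨θ, hθ⟩ := h1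
  obtain ⟨φ, hφ⟩ := h2
  have hθa : θ a = α a := hθ.2.1 a (by simp)
  have hθb : θ b = α b := hθ.2.1 b (by simp)
  have hφa : φ a = α a := hφ.2.1 a (by simp)
  have hφc : φ c = α c := hφ.2.1 c (by simp)
  have hθc : α c < θ c := hθ.2.2 c (by simp [hac.symm, hbc.symm])
  have hφb : α b < φ b := hφ.2.2 b (by simp [hab.symm, hbc])
  have hne : θ ≠ φ := by
    intro h
    rw [h, hφc] at hθc
    exact lt_irrefl _ hθc
  obtain ⟨ρ, hρE, hρa, hρmin, hρeq⟩ := hE2 θ hθ.1 φ hφ.1 hne a (hθa.trans hφa.symm)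
  refine ⟨ρ, hρE, ?_, ?_⟩
  · intro k hk
    rcases Finset.mem_insert.1 hk with hk | hk
    · subst hk
      have : θ k ≠ φ k := by omega
      rw [hρeq k this]
      omega
    · rw [Finset.mem_singleton] at hk
      subst hk
      have : θ k ≠ φ k := by omega
      rw [hρeq k this]
      omega
  · intro k hk
    simp only [Finset.mem_insert, Finset.mem_singleton] at hk
    push_neg at hk
    by_cases hka : k = a
    · subst hka; omega
    · have h1 : α k < θ k := hθ.2.2 k (by simp [hka, hk.1])
      have h2 : α k < φ k := hφ.2.2 k (by simp [hka, hk.2])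
      have := hρmin k
      omega

lemma claimB (hE2 : E2Prop E)
    (hsing : ∀ k : Fin q, DeltaJ {k} α E = ∅)
    (C : Finset (Fin q))
    (hedge : ∀ l ∈ C, ∀ l' ∈ C, l ≠ l' → (DeltaJ {l, l'} α E).Nonempty)
    (hcross : ∀ m : Fin q, m ∉ C → ∀ x ∈ C, DeltaJ {m, x} α E = ∅) :
    ∀ (n : ℕ) (K : Finset (Fin q)) (m : Fin q), m ∉ C → m ∈ K → K ⊆ insert m C →
      (K ∩ C).card ≤ n → DeltaJ K α E = ∅ := by
  intro n
  induction n with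
  | zero =>
    intro K m hmC hmK hKsub hcard
    have hKC : K ∩ C = ∅ := Finset.card_eq_zero.1 (Nat.le_zero.1 hcard)
    have hK : K = {m} := by
      apply Finset.eq_singleton_iff_unique_mem.2
      refine ⟨hmK, ?_⟩
      intro x hx
      rcases Finset.mem_insert.1 (hKsub hx) with h | h
      · exact h
      · exact absurd (Finset.mem_inter.2 ⟨hx, h⟩) (by simp [hKC])
    rw [hK]; exact hsing m
  | succ n ih =>
    intro K m hmC hmK hKsub hcard
    rcases Nat.lt_or_ge (K ∩ C).card 2 with hlt | hge
    · rcases Nat.lt_or_ge (K ∩ C).card 1 with h0 | h1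
      · exact ih K m hmC hmK hKsub (by omega)
      · have hone : (K ∩ C).card = 1 := by omega
        obtain ⟨x, hx⟩ := Finset.card_eq_one.1 hone
        have hxKC : x ∈ K ∩ C := by simp [hx]
        have hxC : x ∈ C := (Finset.mem_inter.1 hxKC).2
        have hK : K = {m, x} := by
          ext k
          simp only [Finset.mem_insert, Finset.mem_singleton]
          constructor
          · intro hk
            rcases Finset.mem_insert.1 (hKsub hk) with h | h
            · exact Or.inl h
            · have : k ∈ K ∩ C := Finset.mem_inter.2 ⟨hk, h⟩
              rw [hx] at this
              exact Or.inr (Finset.mem_singleton.1 this)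
          · rintro (rfl | rfl)
            · exact hmK
            · exact (Finset.mem_inter.1 hxKC).1
        rw [hK]; exact hcross m hmC x hxC
    · rw [Set.eq_empty_iff_forall_notMem]
      intro θ hθ
      obtain ⟨l, hl, l', hl', hll'⟩ := Finset.one_lt_card.1 hge
      have hlK : l ∈ K := (Finset.mem_inter.1 hl).1
      have hlC : l ∈ C := (Finset.mem_inter.1 hl).2
      have hl'K : l' ∈ K := (Finset.mem_inter.1 hl').1
      have hl'C : l' ∈ C := (Finset.mem_inter.1 hl').2
      obtain ⟨φ, hφ⟩ := hedge l hlC l' hl'C hll'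
      have hml : m ≠ l := fun h => hmC (h ▸ hlC)
      have hml' : m ≠ l' := fun h => hmC (h ▸ hl'C)
      have hθm : θ m = α m := hθ.2.1 m hmK
      have hφm : α m < φ m := hφ.2.2 m (by simp [hml, hml'])
      have hθl : θ l = α l := hθ.2.1 l hlK
      have hφl : φ l = α l := hφ.2.1 l (by simp)
      have hne : θ ≠ φ := by
        intro h; rw [h] at hθm; omega
      obtain ⟨ρ, hρE, hρl, hρmin, hρeq⟩ := hE2 θ hθ.1 φ hφ.1 hne l (hθl.trans hφl.symm)
      have hρge : ∀ k, α k ≤ ρ k := by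
        intro k
        have := hρmin k
        have h1 := deltaJ_ge hθ k
        have h2 := deltaJ_ge hφ k
        omega
      set K'' : Finset (Fin q) := Finset.univ.filter (fun k => ρ k = α k) with hK''
      have hρmem : ρ ∈ DeltaJ K'' α E := by
        refine ⟨hρE, ?_, ?_⟩
        · intro k hk
          exact (Finset.mem_filter.1 hk).2
        · intro k hk
          have : ρ k ≠ α k := by
            intro h
            exact hk (Finset.mem_filter.2 ⟨Finset.mem_univ k, h⟩)
          have := hρge k
          omega
      have hmK'' : m ∈ K'' := by
        have : θ m ≠ φ m := by omega
        have := hρeq m this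
        refine Finset.mem_filter.2 ⟨Finset.mem_univ m, by omega⟩
      have hK''sub : K'' ⊆ insert m C := by
        intro k hk
        have hkα : ρ k = α k := (Finset.mem_filter.1 hk).2
        by_contra hcon
        simp only [Finset.mem_insert, not_or] at hcon
        obtain ⟨hkm, hkC⟩ := hcon
        have hkK : k ∉ K := by
          intro h
          rcases Finset.mem_insert.1 (hKsub h) with h | h
          · exact hkm h
          · exact hkC h
        have h1 : α k < θ k := hθ.2.2 k hkK
        have hkl : k ≠ l := fun h => hkC (h ▸ hlC)
        have hkl' : k ≠ l' := fun h => hkC (h ▸ hl'C)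
        have h2 : α k < φ k := hφ.2.2 k (by simp [hkl, hkl'])
        have := hρmin k
        omega
      have hK''card : (K'' ∩ C).card ≤ n := by
        have hsub : K'' ∩ C ⊆ (K ∩ C).erase l := by
          intro k hk
          have hkK'' : k ∈ K'' := (Finset.mem_inter.1 hk).1
          have hkC : k ∈ C := (Finset.mem_inter.1 hk).2
          have hkα : ρ k = α k := (Finset.mem_filter.1 hkK'').2
          have hkl : k ≠ l := by
            intro h
            subst h
            omega
          refine Finset.mem_erase.2 ⟨hkl, Finset.mem_inter.2 ⟨?_, hkC⟩⟩
          by_contra hkK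
          have h1 : α k < θ k := hθ.2.2 k hkK
          have hkl' : k ≠ l' := fun h => hkK (h ▸ hl'K)
          have h2 : α k < φ k := hφ.2.2 k (by simp [hkl, hkl'])
          have := hρmin k
          omega
        have := Finset.card_le_card hsub
        have := Finset.card_erase_of_mem hl
        omega
      have := ih K'' m hmC hmK'' hK''sub hK''card
      rw [Set.eq_empty_iff_forall_notMem] at this
      exact this ρ hρmem

/-- (Y2): every "one equality off C" element has a C-coordinate `≤ c`. -/
def Y2 (E : Set (Fin q → ℤ)) (α : Fin q → ℤ) (C : Finset (Fin q)) (c : Fin q → ℤ) : Prop :=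
  ∀ η ∈ E, ∀ m, m ∉ C → η m = α m → (∀ k, k ∉ C → k ≠ m → α k < η k) →
    ∃ l ∈ C, η l ≤ c l

/-- (Y1): no "strict off C" element sits exactly on the boundary `c` at a single coordinate. -/
def Y1 (E : Set (Fin q → ℤ)) (α : Fin q → ℤ) (C : Finset (Fin q)) (c : Fin q → ℤ) : Prop :=
  ∀ η ∈ E, (∀ k, k ∉ C → α k < η k) → ∀ l ∈ C, η l = c l →
    ∃ l' ∈ C, l' ≠ l ∧ η l' ≤ c l'

lemma descend_step (C : Finset (Fin q)) (hE2 : E2Prop E) {c : Fin q → ℤ}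
    (hY2 : Y2 E α C c) (hnY1 : ¬ Y1 E α C c) :
    ∃ l₀ ∈ C, ∃ η₀ ∈ E, η₀ l₀ = c l₀ ∧
      Y2 E α C (Function.update c l₀ (c l₀ - 1)) := by
  rw [Y1] at hnY1
  push_neg at hnY1
  obtain ⟨η, hηE, hηstrict, l, hlC, hηl, hηgt⟩ := hnY1
  refine ⟨l, hlC, η, hηE, hηl, ?_⟩
  intro η₁ hη₁E m hmC hη₁m hη₁strict
  by_cases hex : ∃ l₁ ∈ C, l₁ ≠ l ∧ η₁ l₁ ≤ c l₁
  · obtain ⟨l₁, h1, h2, h3⟩ := hex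
    exact ⟨l₁, h1, by rwa [Function.update_of_ne h2]⟩
  · push_neg at hex
    obtain ⟨l₁, hl₁C, hl₁le⟩ := hY2 η₁ hη₁E m hmC hη₁m hη₁strict
    have hl₁ : l₁ = l := by
      by_contra h
      exact absurd hl₁le (not_le.2 (hex l₁ hl₁C h))
    subst hl₁
    by_cases hlt : η₁ l₁ ≤ c l₁ - 1
    · exact ⟨l₁, hl₁C, by rwa [Function.update_self]⟩
    · exfalso
      have hη₁l : η₁ l₁ = c l₁ := by omega
      have hne : η ≠ η₁ := by
        intro h
        have h1 : α m < η m := hηstrict m hmC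
        rw [h, hη₁m] at h1
        exact lt_irrefl _ h1
      obtain ⟨ρ, hρE, hρl, hρmin, hρeq⟩ := hE2 η hηE η₁ hη₁E hne l₁ (by omega)
      have hρm : ρ m = α m := by
        have h1 : α m < η m := hηstrict m hmC
        have : η m ≠ η₁ m := by omega
        have := hρeq m this
        omega
      have hρstrict : ∀ k, k ∉ C → k ≠ m → α k < ρ k := by
        intro k hk hkm
        have h1 : α k < η k := hηstrict k hk
        have h2 : α k < η₁ k := hη₁strict k hk hkm
        have := hρmin k
        omega
      obtain ⟨l₂, hl₂C, hl₂le⟩ := hY2 ρ hρE m hmC hρm hρstrict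
      by_cases h : l₂ = l₁
      · subst h; omega
      · have h1 : c l₂ < η l₂ := hηgt l₂ hl₂C h
        have h2 : c l₂ < η₁ l₂ := hex l₂ hl₂C h
        have := hρmin l₂
        omega

lemma descend (C : Finset (Fin q)) (hE2 : E2Prop E) (lam : Fin q → ℤ)
    (hlam : ∀ v ∈ E, ∀ k, lam k ≤ v k) :
    ∀ (N : ℕ) (c : Fin q → ℤ), (∀ l ∈ C, lam l - 1 ≤ c l) → (∀ l ∈ C, c l < α l) →
      Y2 E α C c → (∑ l ∈ C, (c l - (lam l - 1))).toNat ≤ N →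
      ∃ c' : Fin q → ℤ, (∀ l ∈ C, c' l < α l) ∧ Y2 E α C c' ∧ Y1 E α C c' := by
  intro N
  induction N with
  | zero =>
    intro c hlow hup hY2 hN
    by_cases hY1 : Y1 E α C c
    · exact ⟨c, hup, hY2, hY1⟩
    · exfalso
      obtain ⟨l₀, hl₀C, η₀, hη₀E, hη₀l, _⟩ := descend_step C hE2 hY2 hY1
      have hterm : ∀ l ∈ C, 0 ≤ c l - (lam l - 1) := by
        intro l hl
        have := hlow l hl
        omega
      have hsum : 0 ≤ ∑ l ∈ C, (c l - (lam l - 1)) := Finset.sum_nonneg hterm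
      have hαl₀ : lam l₀ ≤ c l₀ := by
        have := hlam η₀ hη₀E l₀
        omega
      have : 1 ≤ ∑ l ∈ C, (c l - (lam l - 1)) := by
        have h1 : 1 ≤ c l₀ - (lam l₀ - 1) := by omega
        have h2 := Finset.sum_le_sum_of_subset_of_nonneg
          (Finset.singleton_subset_iff.2 hl₀C)
          (fun l hl _ => hterm l hl)
        rw [Finset.sum_singleton] at h2
        omega
      omega
  | succ N ih =>
    intro c hlow hup hY2 hN
    by_cases hY1 : Y1 E α C c
    · exact ⟨c, hup, hY2, hY1⟩
    · obtain ⟨l₀, hl₀C, η₀, hη₀E, hη₀l, hY2'⟩ := descend_step C hE2 hY2 hY1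
      set c' := Function.update c l₀ (c l₀ - 1) with hc'
      have hαl₀ : lam l₀ ≤ c l₀ := by
        have := hlam η₀ hη₀E l₀
        omega
      have hlow' : ∀ l ∈ C, lam l - 1 ≤ c' l := by
        intro l hl
        by_cases h : l = l₀
        · subst h; rw [hc', Function.update_self]; omega
        · rw [hc', Function.update_of_ne h]; exact hlow l hl
      have hup' : ∀ l ∈ C, c' l < α l := by
        intro l hl
        by_cases h : l = l₀
        · subst h; rw [hc', Function.update_self]
          have := hup l hl
          omega
        · rw [hc', Function.update_of_ne h]; exact hup l hl
      apply ih c' hlow' hup' hY2'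
      have hterm' : ∀ l ∈ C, 0 ≤ c' l - (lam l - 1) := by
        intro l hl
        have := hlow' l hl
        omega
      have hsum' : 0 ≤ ∑ l ∈ C, (c' l - (lam l - 1)) := Finset.sum_nonneg hterm'
      have hdec : ∑ l ∈ C, (c' l - (lam l - 1)) = (∑ l ∈ C, (c l - (lam l - 1))) - 1 := by
        rw [← Finset.add_sum_erase C _ hl₀C,
          ← Finset.add_sum_erase C (fun l => c l - (lam l - 1)) hl₀C]
        have : ∑ l ∈ C.erase l₀, (c' l - (lam l - 1))
            = ∑ l ∈ C.erase l₀, (c l - (lam l - 1)) := by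
          apply Finset.sum_congr rfl
          intro x hx
          rw [hc', Function.update_of_ne (Finset.ne_of_mem_erase hx)]
        rw [this, hc', Function.update_self]
        ring
      rw [hdec] at hsum' ⊢
      omega

end Stmt16Aux

open Stmt16Aux

theorem stmt16 {p : ℕ} (E : Set (Fin (p + 3) → ℤ)) (hE : GoodIdeal E)
    (γ : Fin (p + 3) → ℤ) (Edual : Set (Fin (p + 3) → ℤ))
    (hdual : Edual = {v | Delta (γ - v - 1) E = ∅})
    (β : Fin (p + 3) → ℤ) (hβ : β ∈ Edual)
    (α : Fin (p + 3) → ℤ) (hα : α = γ - β - 1) (hαE : α ∈ E)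
    (hnotrel : ¬ RelMax E α) :
    ∃ i j : Fin (p + 3), i ≠ j ∧ DeltaJ {i, j} α E = ∅ ∧
      ∀ v : Fin (p + 3) → ℤ, v i = β i → v j = β j →
        (∀ l, l ≠ i → l ≠ j → v l < β l) → (Delta v Edual).Nonempty := by
  classical
  obtain ⟨⟨lam, nu, hlam, hnu⟩, hE1, hE2⟩ := hE
  have hlam' : ∀ v ∈ E, ∀ k, lam k ≤ v k := fun v hv k => hlam v hv k
  -- Delta α E = ∅
  have hβ' : Delta (γ - β - 1) E = ∅ := by
    rw [hdual] at hβ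
    exact hβ
  have hΔα : Delta α E = ∅ := by rw [hα]; exact hβ'
  have hsing : ∀ k : Fin (p + 3), DeltaJ {k} α E = ∅ := Set.iUnion_eq_empty.mp hΔα
  -- some DeltaJ J₀ is empty with card ≥ 2
  have h3 : ¬ ∀ J : Finset (Fin (p + 3)), 2 ≤ J.card → (DeltaJ J α E).Nonempty :=
    fun h => hnotrel ⟨hαE, hΔα, h⟩
  push_neg at h3
  obtain ⟨J₀, hJ₀card, hJ₀e⟩ := h3
  obtain ⟨i₀, j₀, hij, hpair⟩ := pair_empty hE1 J₀ hJ₀card hJ₀e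
  -- the clique of j₀
  set C : Finset (Fin (p + 3)) :=
    Finset.univ.filter (fun x => x = j₀ ∨ (DeltaJ {j₀, x} α E).Nonempty) with hC
  have hmemC : ∀ x, x ∈ C ↔ (x = j₀ ∨ (DeltaJ {j₀, x} α E).Nonempty) := by
    intro x
    rw [hC, Finset.mem_filter]
    simp
  have hjC : j₀ ∈ C := (hmemC j₀).2 (Or.inl rfl)
  have hiC : i₀ ∉ C := by
    rw [hmemC]
    push_neg
    refine ⟨hij, ?_⟩
    rw [Finset.pair_comm j₀ i₀, hpair]
  have hedge : ∀ l ∈ C, ∀ l' ∈ C, l ≠ l' → (DeltaJ {l, l'} α E).Nonempty := by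
    intro l hl l' hl' hll'
    by_cases hl0 : l = j₀
    · subst hl0
      rcases (hmemC l').1 hl' with h | h
      · exact absurd h.symm hll'
      · exact h
    · by_cases hl'0 : l' = j₀
      · subst hl'0
        rcases (hmemC l).1 hl with h | h
        · exact absurd h hl0
        · rw [Finset.pair_comm]
          exact h
      · have h1 : (DeltaJ {j₀, l} α E).Nonempty := by
          rcases (hmemC l).1 hl with h | h
          · exact absurd h hl0
          · exact h
        have h2 : (DeltaJ {j₀, l'} α E).Nonempty := by
          rcases (hmemC l').1 hl' with h | h
          · exact absurd h hl'0
          · exact h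
        exact triangle hE2 (fun h => hl0 h.symm) (fun h => hl'0 h.symm) hll' h1 h2
  have hcross : ∀ m : Fin (p + 3), m ∉ C → ∀ x ∈ C, DeltaJ {m, x} α E = ∅ := by
    intro m hmC x hxC
    by_contra hne
    have hne' : (DeltaJ {m, x} α E).Nonempty := Set.nonempty_iff_ne_empty.2 hne
    have hmj : m ≠ j₀ := fun h => hmC (h ▸ hjC)
    have hmx : m ≠ x := fun h => hmC (h ▸ hxC)
    by_cases hx0 : x = j₀
    · subst hx0
      exact hmC ((hmemC m).2 (Or.inr (by rwa [Finset.pair_comm] at hne')))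
    · have h1 : (DeltaJ {x, j₀} α E).Nonempty := by
        rcases (hmemC x).1 hxC with h | h
        · exact absurd h hx0
        · rwa [Finset.pair_comm] at h
      have h2 : (DeltaJ {x, m} α E).Nonempty := by rwa [Finset.pair_comm] at hne'
      have h3 := triangle hE2 (hx0 : x ≠ j₀) (Ne.symm hmx) (Ne.symm hmj) h1 h2
      exact hmC ((hmemC m).2 (Or.inr h3))
  -- every M-element dips below α somewhere on C
  have hM : ∀ η ∈ E, ∀ m, m ∉ C → η m = α m → (∀ k, k ∉ C → k ≠ m → α k < η k) →
      ∃ l ∈ C, η l < α l := by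
    intro η hηE m hmC hηm hηstrict
    by_contra hno
    push_neg at hno
    set K : Finset (Fin (p + 3)) := Finset.univ.filter (fun k => η k = α k) with hK
    have hmK : m ∈ K := Finset.mem_filter.2 ⟨Finset.mem_univ m, hηm⟩
    have hηK : η ∈ DeltaJ K α E := by
      refine ⟨hηE, fun k hk => (Finset.mem_filter.1 hk).2, ?_⟩
      intro k hk
      have hkne : η k ≠ α k := fun h => hk (Finset.mem_filter.2 ⟨Finset.mem_univ k, h⟩)
      by_cases hkC : k ∈ C
      · have := hno k hkC
        omega
      · have hkm : k ≠ m := fun h => hkne (h ▸ hηm)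
        exact hηstrict k hkC hkm
    have hKsub : K ⊆ insert m C := by
      intro k hk
      by_contra hcon
      simp only [Finset.mem_insert, not_or] at hcon
      have := hηstrict k hcon.2 hcon.1
      have := (Finset.mem_filter.1 hk).2
      omega
    have := claimB hE2 hsing C hedge hcross (K ∩ C).card K m hmC hmK hKsub le_rfl
    rw [Set.eq_empty_iff_forall_notMem] at this
    exact this η hηK
  -- construct the boundary vector c
  have hY2₀ : Y2 E α C (fun k => α k - 1) := by
    intro η hηE m hmC hηm hηstrict
    obtain ⟨l, hlC, hlt⟩ := hM η hηE m hmC hηm hηstrict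
    exact ⟨l, hlC, by show η l ≤ α l - 1; omega⟩
  obtain ⟨c, hcup, hcY2, hcY1⟩ := descend C hE2 lam hlam'
    (∑ l ∈ C, ((α l - 1) - (lam l - 1))).toNat (fun k => α k - 1)
    (fun l hl => by show lam l - 1 ≤ α l - 1; have := hlam' α hαE l; omega)
    (fun l hl => by show α l - 1 < α l; omega) hY2₀ le_rfl
  -- the final witness
  refine ⟨i₀, j₀, hij, hpair, ?_⟩
  intro v hvi hvj hvl
  set δ : Fin (p + 3) → ℤ := fun k => if k ∈ C then c k else α k with hδ
  set w : Fin (p + 3) → ℤ := fun k => γ k - δ k - 1 with hw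
  have hβk : ∀ k, β k = γ k - α k - 1 := by
    intro k
    have := congrFun hα k
    simp only [Pi.sub_apply, Pi.one_apply] at this
    omega
  have hδC : ∀ k ∈ C, δ k = c k := by
    intro k hk
    rw [hδ]
    simp [hk]
  have hδnC : ∀ k, k ∉ C → δ k = α k := by
    intro k hk
    rw [hδ]
    simp [hk]
  have hwdual : w ∈ Edual := by
    rw [hdual]
    show Delta (γ - w - 1) E = ∅
    have hwδ : γ - w - 1 = δ := by
      funext k
      simp only [hw, Pi.sub_apply, Pi.one_apply]
      ring
    rw [hwδ]
    apply Set.iUnion_eq_empty.2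
    intro k
    rw [Set.eq_empty_iff_forall_notMem]
    intro η hη
    have hηE : η ∈ E := hη.1
    have hηk : η k = δ k := hη.2.1 k (Finset.mem_singleton_self k)
    have hηgt : ∀ k', k' ≠ k → δ k' < η k' := by
      intro k' h
      exact hη.2.2 k' (by simp [h])
    by_cases hkC : k ∈ C
    · have hstrict : ∀ k', k' ∉ C → α k' < η k' := by
        intro k' h
        have hk'k : k' ≠ k := fun he => h (he ▸ hkC)
        have h2 := hηgt k' hk'k
        rwa [hδnC k' h] at h2
      have hηck : η k = c k := by rw [hηk, hδC k hkC]
      obtain ⟨l', hl'C, hl'ne, hl'le⟩ := hcY1 η hηE hstrict k hkC hηck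
      have h2 := hηgt l' hl'ne
      rw [hδC l' hl'C] at h2
      omega
    · have hηkα : η k = α k := by rw [hηk, hδnC k hkC]
      have hstrict : ∀ k', k' ∉ C → k' ≠ k → α k' < η k' := by
        intro k' h hk'k
        have h2 := hηgt k' hk'k
        rwa [hδnC k' h] at h2
      obtain ⟨l, hlC, hlle⟩ := hcY2 η hηE k hkC hηkα hstrict
      have hlk : l ≠ k := fun h => hkC (h ▸ hlC)
      have h2 := hηgt l hlk
      rw [hδC l hlC] at h2
      omega
  refine ⟨w, Set.mem_iUnion.2 ⟨i₀, hwdual, ?_, ?_⟩⟩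
  · intro k hk
    rw [Finset.mem_singleton] at hk
    subst hk
    have h1 : δ k = α k := hδnC k hiC
    have h2 : w k = γ k - δ k - 1 := by rw [hw]
    rw [h2, h1, ← hβk k, hvi]
  · intro k hk
    rw [Finset.mem_singleton] at hk
    have h2 : w k = γ k - δ k - 1 := by rw [hw]
    by_cases hkC : k ∈ C
    · have h1 : c k < α k := hcup k hkC
      have h3 : δ k = c k := hδC k hkC
      by_cases hkj : k = j₀
      · subst hkj
        have := hβk k
        omega
      · have h4 := hvl k hk hkj
        have := hβk k
        omega
    · have hkj : k ≠ j₀ := fun h => hkC (h ▸ hjC)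
      have h4 := hvl k hk hkj
      have h3 : δ k = α k := hδnC k hkC
      have := hβk k
      omega
end

section
/- Let E ⊆ ℤ^p be a good semigroup ideal, γ ∈ ℤ^p, K ⊆ ℤ^p with Δ(γ − 1, K) = ∅, and E' ⊆ ℤ^p with E + E' ⊆ K. If α ∈ E is a relative maximal of E and β = γ − α − 1 ∈ E', then β is an absolute maximal of E'. -/
open Finset

theorem stmt17 {p : ℕ} (hp : 2 ≤ p) (E : Set (Fin p → ℤ)) (hE : GoodIdeal E)
    (γ : Fin p → ℤ) (K E' : Set (Fin p → ℤ)) (hK : Delta (γ - 1) K = ∅)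
    (hsum : ∀ a ∈ E, ∀ b ∈ E', a + b ∈ K)
    (α : Fin p → ℤ) (hα : RelMax E α) (hβ : γ - α - 1 ∈ E') :
    AbsMax E' (γ - α - 1) := by
  refine ⟨hβ, fun J hJne hJuniv => ?_⟩
  by_contra h
  obtain ⟨v, hvE', hveq, hvgt⟩ := Set.nonempty_iff_ne_empty.mpr h
  obtain ⟨i, hiJ⟩ := Finset.nonempty_iff_ne_empty.mpr hJne
  obtain ⟨k, hk⟩ : (Jᶜ : Finset (Fin p)).Nonempty := by
    rw [Finset.nonempty_iff_ne_empty]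
    simpa using hJuniv
  have hkJ : k ∉ J := Finset.mem_compl.mp hk
  have hki : k ≠ i := fun h => hkJ (h ▸ hiJ)
  have hcard : 2 ≤ (Jᶜ ∪ {i}).card := by
    calc 2 = ({k, i} : Finset (Fin p)).card := by
          rw [Finset.card_insert_of_notMem (by simp [hki]), Finset.card_singleton]
    _ ≤ (Jᶜ ∪ {i}).card := Finset.card_le_card (by
          intro x hx
          simp only [Finset.mem_insert, Finset.mem_singleton] at hx
          rcases hx with rfl | rfl <;> simp [hk])
  obtain ⟨δ, hδE, hδeq, hδgt⟩ := hα.2.2 _ hcard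
  have hmem : (δ + v) ∈ Delta (γ - 1) K := by
    refine Set.mem_iUnion.mpr ⟨i, hsum δ hδE v hvE', ?_, ?_⟩
    · intro j hj
      rw [Finset.mem_singleton] at hj
      rw [hj]
      have h1 : δ i = α i := hδeq i (by simp)
      have h2 : v i = γ i - α i - 1 := by
        have := hveq i hiJ
        simpa using this
      simp only [Pi.add_apply, Pi.sub_apply, Pi.one_apply, h1, h2]; ring
    · intro j hj
      rw [Finset.mem_singleton] at hj
      simp only [Pi.add_apply, Pi.sub_apply, Pi.one_apply]
      by_cases hjJ : j ∈ J
      · have h1 : α j < δ j := hδgt j (by simp [hjJ, hj])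
        have h2 : v j = γ j - α j - 1 := by simpa using hveq j hjJ
        omega
      · have h1 : δ j = α j := hδeq j (by simp [hjJ])
        have h2 : γ j - α j - 1 < v j := by simpa using hvgt j hjJ
        omega
  rw [hK] at hmem
  exact hmem
end

section
/- Let E ⊆ ℤ^p (p ≥ 3) be a good semigroup ideal, λ ∈ ℤ^p with E ⊆ λ + ℕ^p, β ∈ E, and suppose that every v ∈ ℤ^p with v_1 = β_1, v_2 = β_2 and v_i < β_i for all i ≥ 3 satisfies Δ(v,E) ≠ ∅. Then for λ' = (β_1, β_2, λ_3 − 1, …, λ_p − 1) one has Δ_1(λ', E) ≠ ∅ and Δ_2(λ', E) ≠ ∅. -/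
open Finset

theorem stmt18 {p : ℕ} (E : Set (Fin (p + 3) → ℤ)) (hE : GoodIdeal E)
    (lam : Fin (p + 3) → ℤ) (hlam : ∀ v ∈ E, lam ≤ v)
    (β : Fin (p + 3) → ℤ) (hβ : β ∈ E)
    (hall : ∀ v : Fin (p + 3) → ℤ, v 0 = β 0 → v 1 = β 1 →
      (∀ i, i ≠ 0 → i ≠ 1 → v i < β i) → (Delta v E).Nonempty) :
    (DeltaJ {0} (fun i => if i = 0 then β 0 else if i = 1 then β 1 else lam i - 1) E).Nonempty ∧
    (DeltaJ {1} (fun i => if i = 0 then β 0 else if i = 1 then β 1 else lam i - 1) E).Nonempty := by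
  set lam' : Fin (p + 3) → ℤ :=
    (fun i => if i = 0 then β 0 else if i = 1 then β 1 else lam i - 1) with hlam'
  have hβlam : lam ≤ β := hlam β hβ
  have hl0 : lam' 0 = β 0 := by simp [hlam']
  have hl1 : lam' 1 = β 1 := by simp [hlam']
  have hli : ∀ i : Fin (p + 3), i ≠ 0 → i ≠ 1 → lam' i = lam i - 1 := by
    intro i h0 h1; simp [hlam', h0, h1]
  have hltβ : ∀ i : Fin (p + 3), i ≠ 0 → i ≠ 1 → lam' i < β i := by
    intro i h0 h1; rw [hli i h0 h1]; linarith [hβlam i]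
  have hltE : ∀ v ∈ E, ∀ i : Fin (p + 3), i ≠ 0 → i ≠ 1 → lam' i < v i := by
    intro v hv i h0 h1; rw [hli i h0 h1]; linarith [hlam v hv i]
  obtain ⟨w, hw⟩ := hall lam' hl0 hl1 hltβ
  simp only [Delta, Set.mem_iUnion] at hw
  obtain ⟨k, hwE, hweq, hwgt⟩ := hw
  simp only [Finset.mem_singleton, forall_eq] at hweq hwgt
  -- k must be 0 or 1
  have hk : k = 0 ∨ k = 1 := by
    by_contra h
    push_neg at h
    have h2 : lam k ≤ w k := hlam w hwE k
    rw [hweq, hli k h.1 h.2] at h2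
    linarith
  rcases hk with rfl | rfl
  · -- w ∈ DeltaJ {0}
    have hw1 : β 1 < w 1 := by rw [← hl1]; exact hwgt 1 (Fin.ne_of_val_ne (by simp))
    have hne : w ≠ β := by
      intro h; rw [h] at hw1; exact lt_irrefl _ hw1
    obtain ⟨η, hηE, hη0, hηmin, hηeq⟩ :=
      hE.2.2 w hwE β hβ hne 0 (by rw [hweq, hl0])
    refine ⟨⟨w, hwE, by simpa using hweq, by simpa using hwgt⟩,
      ⟨η, hηE, ?_, ?_⟩⟩
    · intro j hj
      simp only [Finset.mem_singleton] at hj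
      subst hj
      rw [hηeq 1 (ne_of_gt hw1), hl1]
      exact min_eq_right (le_of_lt hw1)
    · intro j hj
      simp only [Finset.mem_singleton] at hj
      by_cases hj0 : j = 0
      · subst hj0; rw [← hweq]; exact hη0
      · have h1 := hltE w hwE j hj0 hj
        have h2 := hltβ j hj0 hj
        have := hηmin j
        cases le_total (w j) (β j) with
          | inl h => rw [min_eq_left h] at this; linarith
          | inr h => rw [min_eq_right h] at this; linarith
  · -- w ∈ DeltaJ {1}
    have hw0 : β 0 < w 0 := by rw [← hl0]; exact hwgt 0 (Fin.ne_of_val_ne (by simp))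
    have hne : w ≠ β := by
      intro h; rw [h] at hw0; exact lt_irrefl _ hw0
    obtain ⟨η, hηE, hη1, hηmin, hηeq⟩ :=
      hE.2.2 w hwE β hβ hne 1 (by rw [hweq, hl1])
    refine ⟨⟨η, hηE, ?_, ?_⟩,
      ⟨w, hwE, by simpa using hweq, by simpa using hwgt⟩⟩
    · intro j hj
      simp only [Finset.mem_singleton] at hj
      subst hj
      rw [hηeq 0 (ne_of_gt hw0), hl0]
      exact min_eq_right (le_of_lt hw0)
    · intro j hj
      simp only [Finset.mem_singleton] at hj
      by_cases hj1 : j = 1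
      · subst hj1; rw [← hweq]; exact hη1
      · have h1 := hltE w hwE j hj hj1
        have h2 := hltβ j hj hj1
        have := hηmin j
        cases le_total (w j) (β j) with
        | inl h => rw [min_eq_left h] at this; linarith
        | inr h => rw [min_eq_right h] at this; linarith
end

section
/- Let E ⊆ ℤ^p be a good semigroup ideal. If for some α ∈ ℤ^p and every J ⊆ {1,…,p} with |J| ≥ 2 one has Δ_J(α,E) ≠ ∅, then α ∈ E. -/
open Finset

/-!
For each coordinate `i`, choose any `j ≠ i`; an element of `Δ_{i,j}(α, E)` lies above `α` and
agrees with it at `i`. The infimum of these `p` elements is `α` itself, and it lies in `E`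
because `E` is closed under binary infima.
-/

theorem Finset.univ_inf'_eq_of_le_of_apply_self_eq {ι β : Type*} [Fintype ι] [Nonempty ι]
    [SemilatticeInf β] {α : ι → β} {w : ι → ι → β} (hle : ∀ i, α ≤ w i)
    (hself : ∀ i, w i i = α i) : univ.inf' univ_nonempty w = α := by
  refine le_antisymm (fun j => ?_) (le_inf' _ _ fun i _ => hle i)
  calc univ.inf' univ_nonempty w j = univ.inf' univ_nonempty (fun i => w i j) :=
        Finset.inf'_apply ..
    _ ≤ w j j := inf'_le _ (mem_univ j)
    _ = α j := hself j

theorem mem_of_forall_exists_mem_le_apply_eq {ι β : Type*} [Fintype ι] [Nonempty ι]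
    [SemilatticeInf β] {E : Set (ι → β)} (hinf : ∀ a ∈ E, ∀ b ∈ E, a ⊓ b ∈ E) {α : ι → β}
    (hα : ∀ i, ∃ v ∈ E, α ≤ v ∧ v i = α i) : α ∈ E := by
  choose w hwE hle hself using hα
  rw [← univ_inf'_eq_of_le_of_apply_self_eq hle hself]
  exact inf'_mem E hinf _ _ _ fun i _ => hwE i

theorem stmt19 {p : ℕ} (hp : 2 ≤ p) (E : Set (Fin p → ℤ)) (hE : GoodIdeal E)
    (α : Fin p → ℤ)
    (h : ∀ J : Finset (Fin p), 2 ≤ J.card → (DeltaJ J α E).Nonempty) : α ∈ E := by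
  have : Nontrivial (Fin p) := Fin.nontrivial_iff_two_le.mpr hp
  refine mem_of_forall_exists_mem_le_apply_eq hE.2.1 fun i => ?_
  obtain ⟨j, hji⟩ := exists_ne i
  obtain ⟨v, hv⟩ := h {i, j} (card_pair hji.symm).ge
  exact ⟨v, hv.1, le_of_mem_DeltaJ hv, hv.2.1 i (mem_insert_self i _)⟩
end
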